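/- arXiv:1211.3162 — 6 statements merged into one kernel-verified Lean document; each statement's English description precedes it below -/
import Mathlib

section
/- Let n ≥ 1, let γ₀ : ℝ → ℝⁿ be of class C¹ and v₀ : ℝ → ℝⁿ be continuous, with γ₀'(x)·v₀(x) = 0 and |γ₀'(x)|² + |v₀(x)|² = 1 for all x ∈ ℝ. Define a(x) = γ₀(x) + ∫₀ˣ v₀(y) dy and b(x) = γ₀(x) − ∫₀ˣ v₀(y) dy, and γ(t,x) = (a(x+t)+b(x−t))/2. Then a and b are C¹ with |a'(x)| = |b'(x)| = 1 for all x, γ is C¹ with γ(0,x) = γ₀(x) and ∂ₜγ(0,x) = v₀(x) for all x, and for all (t,x) one has |∂ₓγ(t,x)|² + |∂ₜγ(t,x)|² = 1 and ∂ₓγ(t,x)·∂ₜγ(t,x) = 0. -/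
open scoped RealInnerProductSpace

/-!
Since `γ₀' ⟂ v₀` and `|γ₀'|² + |v₀|² = 1`, Pythagoras gives `|a'| = |γ₀' + v₀| = 1` and
`|b'| = |γ₀' − v₀| = 1`. The partial derivatives of `γ` are `∂ₓγ = (a' + b')/2` and
`∂ₜγ = (a' − b')/2`, and for unit vectors `u, w` the parallelogram law gives
`|(u + w)/2|² + |(u − w)/2|² = 1` while `⟪u + w, u − w⟫ = |u|² − |w|² = 0`.
-/

section Primitive

variable {F : Type*} [NormedAddCommGroup F] [NormedSpace ℝ F] [CompleteSpace F]

theorem Continuous.contDiff_one_primitive {v : ℝ → F} (hv : Continuous v) (c : ℝ) :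
    ContDiff ℝ 1 (fun x => ∫ y in c..x, v y) := by
  have hderiv : ∀ x, HasDerivAt (fun x => ∫ y in c..x, v y) (v x) x := fun x =>
    (hv.integral_hasStrictDerivAt c x).hasDerivAt
  rw [contDiff_one_iff_deriv]
  refine ⟨fun x => (hderiv x).differentiableAt, ?_⟩
  rwa [funext fun x => (hderiv x).deriv]

end Primitive

section DAlembert

variable {F : Type*} [NormedAddCommGroup F] [NormedSpace ℝ F] {a b : ℝ → F} {a' b' : F}

theorem hasDerivAt_dAlembert_space {t x : ℝ} (ha : HasDerivAt a a' (x + t))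
    (hb : HasDerivAt b b' (x - t)) :
    HasDerivAt (fun y => (1 / 2 : ℝ) • (a (y + t) + b (y - t))) ((1 / 2 : ℝ) • (a' + b')) x := by
  have ha_shift : HasDerivAt (fun y => a (y + t)) a' x := ha.comp_add_const x t
  have hb_shift : HasDerivAt (fun y => b (y - t)) b' x := hb.comp_sub_const x t
  exact (ha_shift.add hb_shift).const_smul _

theorem hasDerivAt_dAlembert_time {t x : ℝ} (ha : HasDerivAt a a' (x + t))
    (hb : HasDerivAt b b' (x - t)) :
    HasDerivAt (fun s => (1 / 2 : ℝ) • (a (x + s) + b (x - s))) ((1 / 2 : ℝ) • (a' - b')) t := by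
  have ha_shift : HasDerivAt (fun s => a (x + s)) a' t := ha.comp_const_add x t
  have hb_shift : HasDerivAt (fun s => b (x - s)) (-b') t := hb.comp_const_sub x t
  rw [sub_eq_add_neg a' b']
  exact (ha_shift.add hb_shift).const_smul _

theorem contDiff_dAlembert {k : WithTop ℕ∞} (ha : ContDiff ℝ k a) (hb : ContDiff ℝ k b) :
    ContDiff ℝ k (fun p : ℝ × ℝ => (1 / 2 : ℝ) • (a (p.2 + p.1) + b (p.2 - p.1))) :=
  ((ha.comp (contDiff_snd.add contDiff_fst)).add
    (hb.comp (contDiff_snd.sub contDiff_fst))).const_smul _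

end DAlembert

section InnerProduct

variable {E : Type*} [NormedAddCommGroup E] [InnerProductSpace ℝ E]

theorem norm_add_eq_one_of_inner_eq_zero {u v : E} (huv : ⟪u, v⟫ = 0)
    (hnorm : ‖u‖ ^ 2 + ‖v‖ ^ 2 = 1) : ‖u + v‖ = 1 := by
  have hsq : ‖u + v‖ ^ 2 = 1 := by
    rw [sq, norm_add_sq_eq_norm_sq_add_norm_sq_real huv, ← sq, ← sq, hnorm]
  exact (pow_eq_one_iff_of_nonneg (norm_nonneg _) two_ne_zero).mp hsq

theorem norm_sub_eq_one_of_inner_eq_zero {u v : E} (huv : ⟪u, v⟫ = 0)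
    (hnorm : ‖u‖ ^ 2 + ‖v‖ ^ 2 = 1) : ‖u - v‖ = 1 := by
  have hsq : ‖u - v‖ ^ 2 = 1 := by
    rw [sq, norm_sub_sq_eq_norm_sq_add_norm_sq_real huv, ← sq, ← sq, hnorm]
  exact (pow_eq_one_iff_of_nonneg (norm_nonneg _) two_ne_zero).mp hsq

theorem norm_half_add_sq_add_norm_half_sub_sq (u w : E) :
    ‖(1 / 2 : ℝ) • (u + w)‖ ^ 2 + ‖(1 / 2 : ℝ) • (u - w)‖ ^ 2 = (‖u‖ ^ 2 + ‖w‖ ^ 2) / 2 := by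
  have hpar := parallelogram_law_with_norm ℝ u w
  rw [norm_smul, norm_smul, Real.norm_of_nonneg (by norm_num)]
  nlinarith [hpar]

theorem inner_half_add_half_sub_eq_zero {u w : E} (h : ‖u‖ = ‖w‖) :
    ⟪(1 / 2 : ℝ) • (u + w), (1 / 2 : ℝ) • (u - w)⟫ = 0 := by
  rw [real_inner_smul_left, real_inner_smul_right, (real_inner_add_sub_eq_zero_iff u w).mpr h,
    mul_zero, mul_zero]

end InnerProduct

theorem stmt_1_general (n : ℕ)
    (γ₀ v₀ : ℝ → EuclideanSpace ℝ (Fin n))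
    (hγ₀ : ContDiff ℝ 1 γ₀) (hv₀ : Continuous v₀)
    (horth : ∀ x, ⟪deriv γ₀ x, v₀ x⟫ = 0)
    (hnorm : ∀ x, ‖deriv γ₀ x‖ ^ 2 + ‖v₀ x‖ ^ 2 = 1)
    (a b : ℝ → EuclideanSpace ℝ (Fin n))
    (ha : ∀ x, a x = γ₀ x + ∫ y in (0:ℝ)..x, v₀ y)
    (hb : ∀ x, b x = γ₀ x - ∫ y in (0:ℝ)..x, v₀ y)
    (γ : ℝ → ℝ → EuclideanSpace ℝ (Fin n))
    (hγ : ∀ t x, γ t x = ((1:ℝ)/2) • (a (x + t) + b (x - t))) :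
    (ContDiff ℝ 1 a ∧ ContDiff ℝ 1 b) ∧
    (∀ x, ‖deriv a x‖ = 1 ∧ ‖deriv b x‖ = 1) ∧
    ContDiff ℝ 1 (fun p : ℝ × ℝ => γ p.1 p.2) ∧
    (∀ x, γ 0 x = γ₀ x ∧ deriv (fun t => γ t x) 0 = v₀ x) ∧
    (∀ t x : ℝ,
      ‖deriv (fun y => γ t y) x‖ ^ 2 + ‖deriv (fun s => γ s x) t‖ ^ 2 = 1 ∧
      ⟪deriv (fun y => γ t y) x, deriv (fun s => γ s x) t⟫ = 0) := by
  obtain rfl : γ = fun t x => (1 / 2 : ℝ) • (a (x + t) + b (x - t)) := funext₂ hγ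
  have hprim : ∀ x, HasDerivAt (fun x => ∫ y in (0:ℝ)..x, v₀ y) (v₀ x) x := fun x =>
    (hv₀.integral_hasStrictDerivAt 0 x).hasDerivAt
  have hγ₀' : ∀ x, HasDerivAt γ₀ (deriv γ₀ x) x := fun x =>
    (hγ₀.differentiable one_ne_zero x).hasDerivAt
  have ha' : ∀ x, HasDerivAt a (deriv γ₀ x + v₀ x) x := fun x => by
    rw [funext ha]; exact (hγ₀' x).add (hprim x)
  have hb' : ∀ x, HasDerivAt b (deriv γ₀ x - v₀ x) x := fun x => by
    rw [funext hb]; exact (hγ₀' x).sub (hprim x)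
  have hunit_a : ∀ x, ‖deriv γ₀ x + v₀ x‖ = 1 := fun x =>
    norm_add_eq_one_of_inner_eq_zero (horth x) (hnorm x)
  have hunit_b : ∀ x, ‖deriv γ₀ x - v₀ x‖ = 1 := fun x =>
    norm_sub_eq_one_of_inner_eq_zero (horth x) (hnorm x)
  have hca : ContDiff ℝ 1 a := by
    rw [funext ha]; exact hγ₀.add (hv₀.contDiff_one_primitive 0)
  have hcb : ContDiff ℝ 1 b := by
    rw [funext hb]; exact hγ₀.sub (hv₀.contDiff_one_primitive 0)
  refine ⟨⟨hca, hcb⟩, fun x => ⟨?_, ?_⟩, contDiff_dAlembert hca hcb, fun x => ⟨?_, ?_⟩,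
    fun t x => ?_⟩
  · rw [(ha' x).deriv, hunit_a]
  · rw [(hb' x).deriv, hunit_b]
  · simp only [add_zero, sub_zero, ha, hb]
    module
  · rw [(hasDerivAt_dAlembert_time (ha' (x + 0)) (hb' (x - 0))).deriv, add_zero, sub_zero]
    module
  · rw [(hasDerivAt_dAlembert_space (ha' (x + t)) (hb' (x - t))).deriv,
      (hasDerivAt_dAlembert_time (ha' (x + t)) (hb' (x - t))).deriv,
      norm_half_add_sq_add_norm_half_sub_sq, hunit_a, hunit_b]
    exact ⟨by norm_num, inner_half_add_half_sub_eq_zero ((hunit_a _).trans (hunit_b _).symm)⟩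

/-- d'Alembert solution for an admissible couple in normalized form:
with `a = γ₀ + ∫ v₀`, `b = γ₀ − ∫ v₀` and `γ(t,x) = (a(x+t)+b(x−t))/2`, the maps `a, b`
are `C¹` with unit-speed derivatives, `γ` is `C¹`, attains the initial data, and satisfies
the orthogonal gauge constraints. -/
theorem stmt_1 (n : ℕ) (hn : 1 ≤ n)
    (γ₀ v₀ : ℝ → EuclideanSpace ℝ (Fin n))
    (hγ₀ : ContDiff ℝ 1 γ₀) (hv₀ : Continuous v₀)
    (horth : ∀ x, ⟪deriv γ₀ x, v₀ x⟫ = 0)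
    (hnorm : ∀ x, ‖deriv γ₀ x‖ ^ 2 + ‖v₀ x‖ ^ 2 = 1)
    (a b : ℝ → EuclideanSpace ℝ (Fin n))
    (ha : ∀ x, a x = γ₀ x + ∫ y in (0:ℝ)..x, v₀ y)
    (hb : ∀ x, b x = γ₀ x - ∫ y in (0:ℝ)..x, v₀ y)
    (γ : ℝ → ℝ → EuclideanSpace ℝ (Fin n))
    (hγ : ∀ t x, γ t x = ((1:ℝ)/2) • (a (x + t) + b (x - t))) :
    (ContDiff ℝ 1 a ∧ ContDiff ℝ 1 b) ∧
    (∀ x, ‖deriv a x‖ = 1 ∧ ‖deriv b x‖ = 1) ∧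
    ContDiff ℝ 1 (fun p : ℝ × ℝ => γ p.1 p.2) ∧
    (∀ x, γ 0 x = γ₀ x ∧ deriv (fun t => γ t x) 0 = v₀ x) ∧
    (∀ t x : ℝ,
      ‖deriv (fun y => γ t y) x‖ ^ 2 + ‖deriv (fun s => γ s x) t‖ ^ 2 = 1 ∧
      ⟪deriv (fun y => γ t y) x, deriv (fun s => γ s x) t⟫ = 0) :=
  stmt_1_general n γ₀ v₀ hγ₀ hv₀ horth hnorm a b ha hb γ hγ
end

section
/- Let n ≥ 1, let γ̂₀ : ℝ → ℝⁿ be of class C¹ with γ̂₀'(x) ≠ 0 for all x, and let v̂₀ : ℝ → ℝⁿ be continuous with |v̂₀(x)| < 1 for all x; assume γ̂₀' and v̂₀ are both periodic with period L > 0. Set E₀ = ∫₀ᴸ |γ̂₀'(x)| / √(1 − |v̂₀(x)|²) dx. Then there exists a strictly increasing C¹ bijection λ : ℝ → ℝ with λ'(x) > 0 for all x, satisfying λ(x + E₀) = λ(x) + L for all x, and such that for all x ∈ ℝ: λ'(x)² |γ̂₀'(λ(x))|² + |v̂₀(λ(x))|² = 1. In other words, the reparametrized couple (γ̂₀∘λ,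 v̂₀∘λ) satisfies the normalization |(γ̂₀∘λ)'|² + |v̂₀∘λ|² = 1 and is periodic with period E₀. -/
/-!
Reparametrize by the "energy" `Φ(x) = ∫₀ˣ |γ̂₀'| / √(1 - |v̂₀|²)`. Its density is continuous,
positive and `L`-periodic, so `Φ` is a `C¹` order isomorphism of `ℝ` with `Φ(x + L) = Φ(x) + E₀`.
Its inverse `λ` has `λ' = √(1 - |v̂₀ ∘ λ|²) / |γ̂₀' ∘ λ|`, which is exactly the normalization.
-/

open Function

section PeriodicPrimitive

variable {f : ℝ → ℝ} {L : ℝ}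

theorem strictMono_primitive_of_pos (hf : Continuous f) (hpos : ∀ x, 0 < f x) :
    StrictMono fun x => ∫ t in (0 : ℝ)..x, f t :=
  strictMono_of_deriv_pos fun x => by
    rw [(hf.integral_hasStrictDerivAt 0 x).hasDerivAt.deriv]
    exact hpos x

theorem primitive_add_period (hf : Continuous f) (hper : Periodic f L) (x : ℝ) :
    ∫ t in (0 : ℝ)..x + L, f t = (∫ t in (0 : ℝ)..x, f t) + ∫ t in (0 : ℝ)..L, f t := by
  rw [← intervalIntegral.integral_add_adjacent_intervals (hf.intervalIntegrable 0 x)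
    (hf.intervalIntegrable x (x + L)), hper.intervalIntegral_add_eq x 0, zero_add]

theorem surjective_primitive_of_periodic_of_pos (hf : Continuous f) (hpos : ∀ x, 0 < f x)
    (hper : Periodic f L) (hL : 0 < L) :
    Surjective fun x => ∫ t in (0 : ℝ)..x, f t :=
  (intervalIntegral.continuous_primitive (fun _ _ => hf.intervalIntegrable _ _) 0).surjective
    (hper.tendsto_atTop_intervalIntegral_of_pos' (hf.intervalIntegrable 0 L) hpos hL)
    (hper.tendsto_atBot_intervalIntegral_of_pos' (hf.intervalIntegrable 0 L) hpos hL)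

noncomputable def periodicPrimitiveOrderIso (hf : Continuous f) (hpos : ∀ x, 0 < f x)
    (hper : Periodic f L) (hL : 0 < L) : ℝ ≃o ℝ :=
  StrictMono.orderIsoOfSurjective _ (strictMono_primitive_of_pos hf hpos)
    (surjective_primitive_of_periodic_of_pos hf hpos hper hL)

variable (hf : Continuous f) (hpos : ∀ x, 0 < f x) (hper : Periodic f L) (hL : 0 < L)

theorem periodicPrimitiveOrderIso_apply (x : ℝ) :
    periodicPrimitiveOrderIso hf hpos hper hL x = ∫ t in (0 : ℝ)..x, f t :=
  rfl

theorem hasDerivAt_periodicPrimitiveOrderIso_symm (y : ℝ) :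
    HasDerivAt (periodicPrimitiveOrderIso hf hpos hper hL).symm
      (f ((periodicPrimitiveOrderIso hf hpos hper hL).symm y))⁻¹ y := by
  set e := periodicPrimitiveOrderIso hf hpos hper hL
  exact HasDerivAt.of_local_left_inverse e.symm.continuous.continuousAt
    (hf.integral_hasStrictDerivAt 0 (e.symm y)).hasDerivAt (hpos _).ne'
    (Filter.Eventually.of_forall e.apply_symm_apply)

theorem contDiff_periodicPrimitiveOrderIso_symm :
    ContDiff ℝ 1 (periodicPrimitiveOrderIso hf hpos hper hL).symm := by
  set e := periodicPrimitiveOrderIso hf hpos hper hL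
  have hderiv : deriv e.symm = fun y => (f (e.symm y))⁻¹ :=
    funext fun y => (hasDerivAt_periodicPrimitiveOrderIso_symm hf hpos hper hL y).deriv
  rw [contDiff_one_iff_deriv, hderiv]
  exact ⟨fun y => (hasDerivAt_periodicPrimitiveOrderIso_symm hf hpos hper hL y).differentiableAt,
    (hf.comp e.symm.continuous).inv₀ fun y => (hpos _).ne'⟩

theorem periodicPrimitiveOrderIso_symm_add_integral (y : ℝ) :
    (periodicPrimitiveOrderIso hf hpos hper hL).symm (y + ∫ t in (0 : ℝ)..L, f t) =
      (periodicPrimitiveOrderIso hf hpos hper hL).symm y + L := by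
  set e := periodicPrimitiveOrderIso hf hpos hper hL
  have hy : ∫ t in (0 : ℝ)..e.symm y, f t = y := e.apply_symm_apply y
  rw [e.symm_apply_eq, periodicPrimitiveOrderIso_apply, primitive_add_period hf hper, hy]

end PeriodicPrimitive

theorem inv_div_sqrt_one_sub_sq_sq_mul_sq_add_sq {a s : ℝ} (ha : a ≠ 0) (hs : |s| < 1) :
    (a / √(1 - s ^ 2))⁻¹ ^ 2 * a ^ 2 + s ^ 2 = 1 := by
  have hs2 : s ^ 2 < 1 := by simpa using sq_lt_sq.mpr (hs.trans_eq (abs_one).symm)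
  rw [inv_div, div_pow, Real.sq_sqrt (by linarith)]
  field_simp
  ring

theorem stmt_2_general (n : ℕ)
    (γ₀ v₀ : ℝ → EuclideanSpace ℝ (Fin n))
    (hγ₀ : ContDiff ℝ 1 γ₀) (himm : ∀ x, deriv γ₀ x ≠ 0)
    (hv₀ : Continuous v₀) (hv₀1 : ∀ x, ‖v₀ x‖ < 1)
    (L : ℝ) (hL : 0 < L)
    (hper1 : Function.Periodic (deriv γ₀) L) (hper2 : Function.Periodic v₀ L)
    (E₀ : ℝ)
    (hE₀ : E₀ = ∫ x in (0:ℝ)..L, ‖deriv γ₀ x‖ / Real.sqrt (1 - ‖v₀ x‖ ^ 2)) :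
    ∃ lam : ℝ → ℝ, StrictMono lam ∧ Function.Bijective lam ∧ ContDiff ℝ 1 lam ∧
      (∀ x, 0 < deriv lam x) ∧
      (∀ x, lam (x + E₀) = lam x + L) ∧
      (∀ x, (deriv lam x) ^ 2 * ‖deriv γ₀ (lam x)‖ ^ 2 + ‖v₀ (lam x)‖ ^ 2 = 1) := by
  set f : ℝ → ℝ := fun t => ‖deriv γ₀ t‖ / √(1 - ‖v₀ t‖ ^ 2)
  have hsqrt_pos (t : ℝ) : 0 < √(1 - ‖v₀ t‖ ^ 2) :=
    Real.sqrt_pos.mpr (by nlinarith [hv₀1 t, norm_nonneg (v₀ t)])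
  have hpos (t : ℝ) : 0 < f t := div_pos (norm_pos_iff.mpr (himm t)) (hsqrt_pos t)
  have hf : Continuous f := ((hγ₀.continuous_deriv le_rfl).norm).div
    (continuous_const.sub (hv₀.norm.pow 2)).sqrt fun t => (hsqrt_pos t).ne'
  have hper : Periodic f L := fun t => by simp only [f, hper1 t, hper2 t]
  set e := periodicPrimitiveOrderIso hf hpos hper hL
  have hderiv (y : ℝ) : deriv e.symm y = (f (e.symm y))⁻¹ :=
    (hasDerivAt_periodicPrimitiveOrderIso_symm hf hpos hper hL y).deriv
  refine ⟨e.symm, e.symm.strictMono, e.symm.bijective,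
    contDiff_periodicPrimitiveOrderIso_symm hf hpos hper hL, fun y => ?_, fun y => ?_, fun y => ?_⟩
  · rw [hderiv]
    exact inv_pos.mpr (hpos _)
  · rw [hE₀]
    exact periodicPrimitiveOrderIso_symm_add_integral hf hpos hper hL y
  · rw [hderiv]
    exact inv_div_sqrt_one_sub_sq_sq_mul_sq_add_sq (norm_ne_zero_iff.mpr (himm _))
      (by rw [abs_norm]; exact hv₀1 _)

/-- normalization of a periodic admissible couple. Given a `C¹` immersion
`γ̂₀` and a continuous velocity `v̂₀` with `|v̂₀| < 1`, both with `L`-periodic data, and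
`E₀ = ∫₀ᴸ |γ̂₀'| / √(1 − |v̂₀|²)`, there is an increasing `C¹` diffeomorphism `λ` of `ℝ`
with `λ(x+E₀) = λ(x)+L` such that the reparametrized couple satisfies the normalization
`|(γ̂₀∘λ)'|² + |v̂₀∘λ|² = 1`. -/
theorem stmt_2 (n : ℕ) (hn : 1 ≤ n)
    (γ₀ v₀ : ℝ → EuclideanSpace ℝ (Fin n))
    (hγ₀ : ContDiff ℝ 1 γ₀) (himm : ∀ x, deriv γ₀ x ≠ 0)
    (hv₀ : Continuous v₀) (hv₀1 : ∀ x, ‖v₀ x‖ < 1)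
    (L : ℝ) (hL : 0 < L)
    (hper1 : Function.Periodic (deriv γ₀) L) (hper2 : Function.Periodic v₀ L)
    (E₀ : ℝ)
    (hE₀ : E₀ = ∫ x in (0:ℝ)..L, ‖deriv γ₀ x‖ / Real.sqrt (1 - ‖v₀ x‖ ^ 2)) :
    ∃ lam : ℝ → ℝ, StrictMono lam ∧ Function.Bijective lam ∧ ContDiff ℝ 1 lam ∧
      (∀ x, 0 < deriv lam x) ∧
      (∀ x, lam (x + E₀) = lam x + L) ∧
      (∀ x, (deriv lam x) ^ 2 * ‖deriv γ₀ (lam x)‖ ^ 2 + ‖v₀ (lam x)‖ ^ 2 = 1) :=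
  stmt_2_general n γ₀ v₀ hγ₀ himm hv₀ hv₀1 L hL hper1 hper2 E₀ hE₀
end

section
/- Let n ≥ 1, let a, b : ℝ → ℝⁿ be of class C¹ with |a'(s)| = |b'(s)| = 1 for all s, define γ(t,x) = (a(x+t)+b(x−t))/2 and ψ(t,x) = (t, γ(t,x)) ∈ ℝ^{1+n}. Let (v,w)ₘ = −v⁰w⁰ + Σᵢ vⁱwⁱ denote the Minkowski inner product on ℝ^{1+n}. Then for every (t,x), the determinant of the 2×2 induced metric matrix with entries g₁₁ = (∂ₜψ, ∂ₜψ)ₘ, g₁₂ = g₂₁ = (∂ₜψ, ∂ₓψ)ₘ, g₂₂ = (∂ₓψ, ∂ₓψ)ₘ equals −|∂ₓγ(t,x)|⁴. In particular this determinant is strictly negative (i.e. ψ is a timelike immersion at (t,x)) if and only if a'(x+t) + b'(x−t) ≠ 0. -/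
open scoped RealInnerProductSpace

/-!
The two tangent vectors of `ψ` are `(1, u)` and `(0, v)` with `u = (a' - b')/2` and
`v = (a' + b')/2 = ∂ₓγ`. Since `‖a'‖ = ‖b'‖ = 1`, the vectors `u` and `v` are orthogonal and
`‖u‖² + ‖v‖² = 1` by the parallelogram law, so the Gram determinant
`(‖u‖² - 1) ‖v‖² - ⟪u, v⟫²` collapses to `-‖v‖⁴`.
-/

section WaveProfile

variable {E : Type*} [NormedAddCommGroup E] [NormedSpace ℝ E] {a b : ℝ → E} {A B : E} {t x : ℝ}

theorem hasDerivAt_halfSum_time (ha : HasDerivAt a A (x + t)) (hb : HasDerivAt b B (x - t)) :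
    HasDerivAt (fun s => ((1:ℝ)/2) • (a (x + s) + b (x - s))) (((1:ℝ)/2) • (A - B)) t := by
  rw [sub_eq_add_neg]
  exact ((ha.comp_const_add x t).add (hb.comp_const_sub x t)).const_smul _

theorem hasDerivAt_halfSum_space (ha : HasDerivAt a A (x + t)) (hb : HasDerivAt b B (x - t)) :
    HasDerivAt (fun y => ((1:ℝ)/2) • (a (y + t) + b (y - t))) (((1:ℝ)/2) • (A + B)) x :=
  ((ha.comp_add_const x t).add (hb.comp_sub_const x t)).const_smul _

end WaveProfile

section Minkowski

variable {E : Type*} [NormedAddCommGroup E] [InnerProductSpace ℝ E]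

def minkowskiInner (v w : ℝ × E) : ℝ := -(v.1 * w.1) + ⟪v.2, w.2⟫

theorem minkowskiInner_gram_det {u v : E} (hsum : ‖u‖ ^ 2 + ‖v‖ ^ 2 = 1) (horth : ⟪u, v⟫ = 0) :
    minkowskiInner (1, u) (1, u) * minkowskiInner (0, v) (0, v)
        - minkowskiInner (1, u) (0, v) ^ 2 = -‖v‖ ^ 4 := by
  simp only [minkowskiInner, real_inner_self_eq_norm_sq, horth]
  linear_combination ‖v‖ ^ 2 * hsum

theorem norm_half_sub_sq_add_norm_half_add_sq (A B : E) :
    ‖((1:ℝ)/2) • (A - B)‖ ^ 2 + ‖((1:ℝ)/2) • (A + B)‖ ^ 2 = (‖A‖ ^ 2 + ‖B‖ ^ 2) / 2 := by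
  have hpar := parallelogram_law_with_norm ℝ A B
  rw [norm_smul, norm_smul, Real.norm_of_nonneg (by norm_num)]
  linear_combination hpar / 4

theorem inner_half_sub_half_add_of_norm_eq {A B : E} (h : ‖A‖ = ‖B‖) :
    ⟪((1:ℝ)/2) • (A - B), ((1:ℝ)/2) • (A + B)⟫ = 0 := by
  rw [inner_smul_left, inner_smul_right, real_inner_comm,
    (real_inner_add_sub_eq_zero_iff A B).mpr h, mul_zero, mul_zero]

end Minkowski

theorem stmt_3_general (n : ℕ)
    (a b : ℝ → EuclideanSpace ℝ (Fin n))
    (ha : ContDiff ℝ 1 a) (hb : ContDiff ℝ 1 b)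
    (hnorm : ∀ s, ‖deriv a s‖ = 1 ∧ ‖deriv b s‖ = 1)
    (γ : ℝ → ℝ → EuclideanSpace ℝ (Fin n))
    (hγ : ∀ t x, γ t x = ((1:ℝ)/2) • (a (x + t) + b (x - t)))
    (mink : (ℝ × EuclideanSpace ℝ (Fin n)) → (ℝ × EuclideanSpace ℝ (Fin n)) → ℝ)
    (hmink : ∀ v w, mink v w = -(v.1 * w.1) + ⟪v.2, w.2⟫)
    (t x : ℝ)
    (ψt ψx : ℝ × EuclideanSpace ℝ (Fin n))
    (hψt : ψt = deriv (fun s => ((s, γ s x) : ℝ × EuclideanSpace ℝ (Fin n))) t)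
    (hψx : ψx = deriv (fun y => ((t, γ t y) : ℝ × EuclideanSpace ℝ (Fin n))) x)
    (g11 g12 g22 : ℝ)
    (hg11 : g11 = mink ψt ψt) (hg12 : g12 = mink ψt ψx) (hg22 : g22 = mink ψx ψx) :
    g11 * g22 - g12 ^ 2 = -‖deriv (fun y => γ t y) x‖ ^ 4 ∧
    (g11 * g22 - g12 ^ 2 < 0 ↔ deriv a (x + t) + deriv b (x - t) ≠ 0) := by
  obtain rfl : γ = fun t x => ((1:ℝ)/2) • (a (x + t) + b (x - t)) := funext₂ hγ
  obtain rfl : mink = minkowskiInner := funext₂ hmink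
  beta_reduce at hψt hψx ⊢
  have hA := (ha.differentiable one_ne_zero (x + t)).hasDerivAt
  have hB := (hb.differentiable one_ne_zero (x - t)).hasDerivAt
  have hγx := hasDerivAt_halfSum_space hA hB
  rw [((hasDerivAt_id' t).prodMk (hasDerivAt_halfSum_time hA hB)).deriv] at hψt
  rw [((hasDerivAt_const x t).prodMk hγx).deriv] at hψx
  subst hψt hψx hg11 hg12 hg22
  obtain ⟨hA1, hB1⟩ : ‖deriv a (x + t)‖ = 1 ∧ ‖deriv b (x - t)‖ = 1 := ⟨(hnorm _).1, (hnorm _).2⟩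
  have hsum := norm_half_sub_sq_add_norm_half_add_sq (deriv a (x + t)) (deriv b (x - t))
  rw [hA1, hB1] at hsum
  rw [hγx.deriv, minkowskiInner_gram_det (by linarith)
    (inner_half_sub_half_add_of_norm_eq (hA1.trans hB1.symm))]
  refine ⟨rfl, ?_⟩
  rw [neg_lt_zero, Even.pow_pos_iff (by decide) four_ne_zero, norm_ne_zero_iff,
    smul_ne_zero_iff_right (by norm_num)]

/-- for `ψ(t,x) = (t, γ(t,x))` with `γ(t,x) = (a(x+t)+b(x−t))/2` and
`|a'| = |b'| = 1`, the determinant of the induced (Minkowski) metric equals `−|∂ₓγ|⁴`;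
in particular it is negative (timelike immersion) iff `a'(x+t) + b'(x−t) ≠ 0`. -/
theorem stmt_3 (n : ℕ) (hn : 1 ≤ n)
    (a b : ℝ → EuclideanSpace ℝ (Fin n))
    (ha : ContDiff ℝ 1 a) (hb : ContDiff ℝ 1 b)
    (hnorm : ∀ s, ‖deriv a s‖ = 1 ∧ ‖deriv b s‖ = 1)
    (γ : ℝ → ℝ → EuclideanSpace ℝ (Fin n))
    (hγ : ∀ t x, γ t x = ((1:ℝ)/2) • (a (x + t) + b (x - t)))
    (mink : (ℝ × EuclideanSpace ℝ (Fin n)) → (ℝ × EuclideanSpace ℝ (Fin n)) → ℝ)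
    (hmink : ∀ v w, mink v w = -(v.1 * w.1) + ⟪v.2, w.2⟫)
    (t x : ℝ)
    (ψt ψx : ℝ × EuclideanSpace ℝ (Fin n))
    (hψt : ψt = deriv (fun s => ((s, γ s x) : ℝ × EuclideanSpace ℝ (Fin n))) t)
    (hψx : ψx = deriv (fun y => ((t, γ t y) : ℝ × EuclideanSpace ℝ (Fin n))) x)
    (g11 g12 g22 : ℝ)
    (hg11 : g11 = mink ψt ψt) (hg12 : g12 = mink ψt ψx) (hg22 : g22 = mink ψx ψx) :
    g11 * g22 - g12 ^ 2 = -‖deriv (fun y => γ t y) x‖ ^ 4 ∧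
    (g11 * g22 - g12 ^ 2 < 0 ↔ deriv a (x + t) + deriv b (x - t) ≠ 0) :=
  stmt_3_general n a b ha hb hnorm γ hγ mink hmink t x ψt ψx hψt hψx g11 g12 g22 hg11 hg12 hg22
end

section
/- Let a, b : ℝ → ℝ² be of class C¹ with |a'(s)| = |b'(s)| = 1 for all s, and suppose a' and b' are periodic with period E₀ > 0 and ∫₀^{E₀} (a'(s) + b'(s)) ds = 0. Then there exist s, σ ∈ ℝ such that a'(s) + b'(σ) = 0. Consequently, by the characterization of global timelike extremal immersions, the map γ(t,x) = (a(x+t)+b(x−t))/2 has ∂ₓγ(t₀,x₀) = 0 at some point: no closed curve in the plane can be immersed in a global timelike extremal cylinder in ℝ^{1+2}. -/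
/-!
Identify the plane with `ℂ` and suppose `a'(s) + b'(σ) ≠ 0` for all `s, σ`. Measuring arguments
against fixed values, the unit curves `a'` and `b'` lift to continuous angles `θ₁`, `θ₂` whose gap
`θ₁ s - θ₂ σ` never reaches `±π`, so by connectedness of `ℝ²` it stays in `(-π, π)`. Then
`a'(s) + b'(s) = 2 cos((θ₁ - θ₂) / 2) exp(i (θ₁ + θ₂) / 2)` with a positive first factor, and the
mean angle `(θ₁ + θ₂) / 2` varies by less than `π` on `[0, E₀]`: all these vectors lie in an open
half-plane, so their integral cannot vanish. Where `x + t = s` and `x - t = σ`,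
`∂ₓγ = (a'(s) + b'(σ)) / 2` vanishes.
-/

open Complex Set Module
open scoped Real

theorem Continuous.abs_lt_of_forall_abs_ne {X : Type*} [TopologicalSpace X] [PreconnectedSpace X]
    {f : X → ℝ} (hf : Continuous f) {c : ℝ} {x₀ : X} (h₀ : |f x₀| < c)
    (hne : ∀ x, |f x| ≠ c) (x : X) : |f x| < c := by
  have hclosed : {x | |f x| < c} = {x | |f x| ≤ c} := by
    ext x
    simp [lt_iff_le_and_ne, hne x]
  have hclopen : IsClopen {x | |f x| < c} :=
    ⟨hclosed ▸ isClosed_le (by fun_prop) continuous_const,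
      isOpen_lt (by fun_prop) continuous_const⟩
  exact (show x ∈ {x | |f x| < c} from hclopen.eq_univ ⟨x₀, h₀⟩ ▸ mem_univ x)

theorem Real.cos_sub_add_cos_sub_pos {x y ψ : ℝ} (hxy : |x - y| < π)
    (hψ : |(x + y) / 2 - ψ| < π / 2) : 0 < Real.cos (x - ψ) + Real.cos (y - ψ) := by
  rw [Real.cos_add_cos]
  rw [abs_lt] at hxy hψ
  have h₁ : 0 < Real.cos ((x - ψ + (y - ψ)) / 2) :=
    Real.cos_pos_of_mem_Ioo ⟨by linarith, by linarith⟩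
  have h₂ : 0 < Real.cos ((x - ψ - (y - ψ)) / 2) :=
    Real.cos_pos_of_mem_Ioo ⟨by linarith, by linarith⟩
  positivity

namespace Complex

theorem exp_arg_mul_I_of_norm_eq_one {z : ℂ} (hz : ‖z‖ = 1) : exp (arg z * I) = z := by
  simpa [hz] using norm_mul_exp_arg_mul_I z

theorem mem_slitPlane_of_norm_eq_one {z : ℂ} (hz : ‖z‖ = 1) (h : z ≠ -1) : z ∈ slitPlane := by
  refine mem_slitPlane_iff_arg.2 ⟨fun harg => h ?_, norm_ne_zero_iff.1 (by simp [hz])⟩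
  rw [← exp_arg_mul_I_of_norm_eq_one hz, harg, exp_pi_mul_I]

theorem exp_mul_I_eq_neg_one_of_abs_eq_pi {x : ℝ} (hx : |x| = π) : exp (x * I) = -1 := by
  rcases (abs_eq Real.pi_pos.le).1 hx with rfl | rfl
  · exact exp_pi_mul_I
  · simp [neg_mul, exp_neg_pi_mul_I]

theorem intervalIntegral_ne_zero_of_re_mul_pos {f : ℝ → ℂ} (hf : Continuous f) {a b : ℝ}
    (hab : a < b) (w : ℂ) (hpos : ∀ s ∈ Ioo a b, 0 < (f s * w).re) :
    ∫ s in a..b, f s ≠ 0 := by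
  intro hzero
  have hfw : Continuous fun s => f s * w := hf.mul continuous_const
  have hre : ∫ s in a..b, (f s * w).re = (∫ s in a..b, f s * w).re :=
    reCLM.intervalIntegral_comp_comm (hfw.intervalIntegrable a b)
  have hpos_int : 0 < ∫ s in a..b, (f s * w).re :=
    intervalIntegral.intervalIntegral_pos_of_pos_on
      ((continuous_re.comp hfw).intervalIntegrable a b) hpos hab
  rw [hre, intervalIntegral.integral_mul_const, hzero, zero_mul, zero_re] at hpos_int
  exact hpos_int.false

theorem re_exp_mul_I_add_exp_mul_I_mul_exp_neg (θ₁ θ₂ ψ : ℝ) :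
    ((exp (θ₁ * I) + exp (θ₂ * I)) * exp (-(ψ * I))).re =
      Real.cos (θ₁ - ψ) + Real.cos (θ₂ - ψ) := by
  rw [add_mul, ← exp_add, ← exp_add, add_re, ← sub_eq_add_neg, ← sub_eq_add_neg, ← sub_mul,
    ← sub_mul, ← ofReal_sub, ← ofReal_sub, exp_ofReal_mul_I_re, exp_ofReal_mul_I_re]

theorem intervalIntegral_exp_mul_I_add_exp_mul_I_ne_zero {θ₁ θ₂ : ℝ → ℝ} (h₁ : Continuous θ₁)
    (h₂ : Continuous θ₂) (hθ : ∀ s σ, |θ₁ s - θ₂ σ| < π) {a b : ℝ} (hab : a < b) :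
    ∫ s in a..b, (exp (θ₁ s * I) + exp (θ₂ s * I)) ≠ 0 := by
  let mid : ℝ → ℝ := fun s => (θ₁ s + θ₂ s) / 2
  obtain ⟨sM, -, hM⟩ := isCompact_Icc.exists_isMaxOn (nonempty_Icc.2 hab.le)
    (f := mid) (by fun_prop)
  obtain ⟨sm, -, hm⟩ := isCompact_Icc.exists_isMinOn (nonempty_Icc.2 hab.le)
    (f := mid) (by fun_prop)
  have hspread : mid sM - mid sm < π := by
    have h₁ := (abs_lt.1 (hθ sM sm)).2
    have h₂ := (abs_lt.1 (hθ sm sM)).1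
    simp only [mid]
    linarith
  -- the direction `ψ` bisects the range of the mean angle over `[a, b]`
  set ψ := (mid sM + mid sm) / 2 with hψ
  refine intervalIntegral_ne_zero_of_re_mul_pos (by fun_prop) hab (exp (-(ψ * I))) ?_
  intro s hs
  rw [re_exp_mul_I_add_exp_mul_I_mul_exp_neg]
  have hsM : mid s ≤ mid sM := hM (Ioo_subset_Icc_self hs)
  have hsm : mid sm ≤ mid s := hm (Ioo_subset_Icc_self hs)
  exact Real.cos_sub_add_cos_sub_pos (hθ s s)
    (show |mid s - ψ| < π / 2 from abs_lt.2 ⟨by linarith, by linarith⟩)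

theorem abs_sub_lt_pi_of_exp_mul_I_add_ne_zero {θ₁ θ₂ : ℝ → ℝ} (h₁ : Continuous θ₁)
    (h₂ : Continuous θ₂) (h₀ : |θ₁ 0 - θ₂ 0| < π)
    (hne : ∀ s σ, exp (θ₁ s * I) + exp (θ₂ σ * I) ≠ 0) (s σ : ℝ) :
    |θ₁ s - θ₂ σ| < π := by
  refine Continuous.abs_lt_of_forall_abs_ne (f := fun p : ℝ × ℝ => θ₁ p.1 - θ₂ p.2)
    (by fun_prop) (x₀ := (0, 0)) h₀ (fun p hp => hne p.1 p.2 ?_) (s, σ)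
  have hsplit :
      exp (θ₁ p.1 * I) = exp (θ₂ p.2 * I) * exp (((θ₁ p.1 - θ₂ p.2 : ℝ) : ℂ) * I) := by
    rw [← exp_add]
    push_cast
    ring_nf
  rw [hsplit, exp_mul_I_eq_neg_one_of_abs_eq_pi hp]
  ring

theorem exists_continuous_angles {A B : ℝ → ℂ} (hA : Continuous A) (hB : Continuous B)
    (hA1 : ∀ s, ‖A s‖ = 1) (hB1 : ∀ s, ‖B s‖ = 1) (hAB : ∀ s σ, A s + B σ ≠ 0) :
    ∃ w ≠ 0, ∃ θ₁ θ₂ : ℝ → ℝ, Continuous θ₁ ∧ Continuous θ₂ ∧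
      (∀ s, A s = w * exp (θ₁ s * I)) ∧ (∀ s, B s = w * exp (θ₂ s * I)) ∧
      |θ₁ 0 - θ₂ 0| < π := by
  have hA0 : ∀ s, A s ≠ 0 := fun s => norm_ne_zero_iff.1 (by simp [hA1])
  have hB0 : ∀ s, B s ≠ 0 := fun s => norm_ne_zero_iff.1 (by simp [hB1])
  have hunit : ∀ s σ, ‖A s / B σ‖ = 1 := fun s σ => by rw [norm_div, hA1, hB1, div_one]
  have hslit : ∀ s σ, A s / B σ ∈ slitPlane := fun s σ =>
    mem_slitPlane_of_norm_eq_one (hunit s σ) fun h =>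
      hAB s σ (by rw [div_eq_iff (hB0 σ)] at h; rw [h]; ring)
  refine ⟨B 0, hB0 0, fun s => arg (A s / B 0), fun σ => arg (A 0 / B 0) - arg (A 0 / B σ),
    ?_, ?_, fun s => ?_, fun σ => ?_, ?_⟩
  · exact continuous_iff_continuousAt.2 fun s =>
      (continuousAt_arg (hslit s 0)).comp (f := fun s => A s / B 0)
        (hA.div_const _).continuousAt
  · exact continuous_const.sub <| continuous_iff_continuousAt.2 fun σ =>
      (continuousAt_arg (hslit 0 σ)).comp (f := fun σ => A 0 / B σ)
        (continuous_const.div hB hB0).continuousAt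
  · rw [exp_arg_mul_I_of_norm_eq_one (hunit s 0)]
    field_simp [hB0 0]
  · push_cast
    rw [sub_mul, exp_sub, exp_arg_mul_I_of_norm_eq_one (hunit 0 0),
      exp_arg_mul_I_of_norm_eq_one (hunit 0 σ)]
    field_simp [hA0 0, hB0 0, hB0 σ]
  · simpa using abs_lt.2
      ⟨neg_pi_lt_arg _, (arg_le_pi _).lt_of_ne (slitPlane_arg_ne_pi (hslit 0 0))⟩

theorem exists_add_eq_zero_of_intervalIntegral_add_eq_zero {A B : ℝ → ℂ} (hA : Continuous A)
    (hB : Continuous B) (hA1 : ∀ s, ‖A s‖ = 1) (hB1 : ∀ s, ‖B s‖ = 1) {a b : ℝ} (hab : a < b)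
    (hint : ∫ s in a..b, (A s + B s) = 0) : ∃ s σ, A s + B σ = 0 := by
  by_contra! hAB
  obtain ⟨w, hw, θ₁, θ₂, h₁, h₂, hAθ, hBθ, h₀⟩ := exists_continuous_angles hA hB hA1 hB1 hAB
  have hθ := abs_sub_lt_pi_of_exp_mul_I_add_ne_zero h₁ h₂ h₀ fun s σ h =>
    hAB s σ (by rw [hAθ, hBθ, ← mul_add, h, mul_zero])
  refine intervalIntegral_exp_mul_I_add_exp_mul_I_ne_zero h₁ h₂ hθ hab ?_
  have hfactor :
      ∫ s in a..b, (A s + B s) = w * ∫ s in a..b, (exp (θ₁ s * I) + exp (θ₂ s * I)) := by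
    simp only [hAθ, hBθ, ← mul_add, intervalIntegral.integral_const_mul]
  rw [hint, eq_comm, mul_eq_zero] at hfactor
  exact hfactor.resolve_left hw

end Complex

theorem exists_add_eq_zero_of_intervalIntegral_add_eq_zero {F : Type*} [NormedAddCommGroup F]
    [InnerProductSpace ℝ F] (hF : finrank ℝ F = 2) {f g : ℝ → F} (hf : Continuous f)
    (hg : Continuous g) (hf1 : ∀ s, ‖f s‖ = 1) (hg1 : ∀ s, ‖g s‖ = 1) {a b : ℝ} (hab : a < b)
    (hint : ∫ s in a..b, (f s + g s) = 0) : ∃ s σ, f s + g σ = 0 := by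
  have : FiniteDimensional ℝ F := Module.finite_of_finrank_eq_succ hF
  let e : F ≃ₗᵢ[ℝ] ℂ :=
    (isometryOfOrthonormal ((stdOrthonormalBasis ℝ F).reindex (finCongr hF))).symm
  have hint_e : ∫ s in a..b, (e (f s) + e (g s)) = 0 := by
    calc ∫ s in a..b, (e (f s) + e (g s)) = ∫ s in a..b, e.toLinearIsometry (f s + g s) := by
          simp only [map_add, LinearIsometryEquiv.coe_toLinearIsometry]
      _ = 0 := by rw [e.toLinearIsometry.intervalIntegral_comp_comm, hint, map_zero]
  obtain ⟨s, σ, h⟩ := Complex.exists_add_eq_zero_of_intervalIntegral_add_eq_zero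
    (e.continuous.comp hf) (e.continuous.comp hg) (by simpa using hf1) (by simpa using hg1) hab
    hint_e
  exact ⟨s, σ, e.injective (by simpa using h)⟩

theorem hasDerivAt_smul_comp_add_add_comp_sub {F : Type*} [NormedAddCommGroup F]
    [NormedSpace ℝ F] {a b : ℝ → F} (c : ℝ) {t x : ℝ} (ha : DifferentiableAt ℝ a (x + t))
    (hb : DifferentiableAt ℝ b (x - t)) :
    HasDerivAt (fun y => c • (a (y + t) + b (y - t)))
      (c • (deriv a (x + t) + deriv b (x - t))) x :=
  ((ha.hasDerivAt.comp_add_const x t).add (hb.hasDerivAt.comp_sub_const x t)).const_smul c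

theorem stmt_8_general
    (a b : ℝ → EuclideanSpace ℝ (Fin 2))
    (ha : ContDiff ℝ 1 a) (hb : ContDiff ℝ 1 b)
    (hnorm : ∀ s, ‖deriv a s‖ = 1 ∧ ‖deriv b s‖ = 1)
    (E₀ : ℝ) (hE₀ : 0 < E₀)
    (hint : (∫ s in (0:ℝ)..E₀, (deriv a s + deriv b s)) = 0)
    (γ : ℝ → ℝ → EuclideanSpace ℝ (Fin 2))
    (hγ : ∀ t x, γ t x = ((1:ℝ)/2) • (a (x + t) + b (x - t))) :
    (∃ s σ : ℝ, deriv a s + deriv b σ = 0) ∧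
    ∃ t₀ x₀ : ℝ, deriv (fun y => γ t₀ y) x₀ = 0 := by
  obtain ⟨s, σ, hsσ⟩ := exists_add_eq_zero_of_intervalIntegral_add_eq_zero
    finrank_euclideanSpace_fin (ha.continuous_deriv le_rfl) (hb.continuous_deriv le_rfl)
    (fun s => (hnorm s).1) (fun s => (hnorm s).2) hE₀ hint
  refine ⟨⟨s, σ, hsσ⟩, (s - σ) / 2, (s + σ) / 2, ?_⟩
  have hderiv := hasDerivAt_smul_comp_add_add_comp_sub ((1 : ℝ) / 2)
    (ha.differentiable one_ne_zero _) (hb.differentiable one_ne_zero _)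
    (t := (s - σ) / 2) (x := (s + σ) / 2)
  rw [show (s + σ) / 2 + (s - σ) / 2 = s by ring, show (s + σ) / 2 - (s - σ) / 2 = σ by ring,
    hsσ, smul_zero] at hderiv
  simpa only [hγ] using hderiv.deriv

/-- (no global timelike extremal cylinders in `ℝ^{1+2}`) if `a, b : ℝ → ℝ²`
are `C¹` with `|a'| = |b'| = 1`, `a'` and `b'` periodic with period `E₀ > 0` and
`∫₀^{E₀} (a' + b') = 0`, then `a'(s) + b'(σ) = 0` for some `s, σ`; consequently
`∂ₓγ(t₀,x₀) = 0` at some point, where `γ(t,x) = (a(x+t)+b(x−t))/2`. -/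
theorem stmt_8
    (a b : ℝ → EuclideanSpace ℝ (Fin 2))
    (ha : ContDiff ℝ 1 a) (hb : ContDiff ℝ 1 b)
    (hnorm : ∀ s, ‖deriv a s‖ = 1 ∧ ‖deriv b s‖ = 1)
    (E₀ : ℝ) (hE₀ : 0 < E₀)
    (hpera : Function.Periodic (deriv a) E₀) (hperb : Function.Periodic (deriv b) E₀)
    (hint : (∫ s in (0:ℝ)..E₀, (deriv a s + deriv b s)) = 0)
    (γ : ℝ → ℝ → EuclideanSpace ℝ (Fin 2))
    (hγ : ∀ t x, γ t x = ((1:ℝ)/2) • (a (x + t) + b (x - t))) :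
    (∃ s σ : ℝ, deriv a s + deriv b σ = 0) ∧
    ∃ t₀ x₀ : ℝ, deriv (fun y => γ t₀ y) x₀ = 0 :=
  stmt_8_general a b ha hb hnorm E₀ hE₀ hint γ hγ
end

section
/- Let n ≥ 2, k ≥ 1, and let c : ℝ → ℝⁿ be a 2π-periodic map of class C^k with |c(x)| = 1 for all x, such that 0 lies in the interior of the convex hull of the range of c. Then there exist L > 0 and an L-periodic map a : ℝ → ℝⁿ of class C^k such that |a'(x)| = 1 for all x and range(a') = range(c); that is, c can be realized as the set of unit tangent vectors of a closed curve a parametrized by arclength. -/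
/-!
Reparametrize `c` by a smooth `φ : ℝ → ℝ` with `φ (t + L) = φ t + 2π` that pauses, for times
`λⱼ ≥ 0`, at finitely many parameters `uⱼ`. Then `a x = ∫₀ˣ c (φ t) dt` has unit speed and
`range a' = range c`, and it is `L`-periodic as soon as `∫₀ᴸ c ∘ φ = 0`. That integral is
`∑ λⱼ c(uⱼ) + W` with `W` independent of the pause lengths. Since `0` is interior to the convex hull
of `range c`, finitely many points `c(uⱼ)` already span `ℝⁿ` as a convex cone, so nonnegative
`λⱼ` with `∑ λⱼ c(uⱼ) = -W` exist. The moves between pauses use `smoothTransition`, all of whose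
derivatives vanish at the ends, so `φ` is smooth.
-/

open Set Finset Filter Topology Real MeasureTheory
open scoped ContDiff

section ConeHull

variable {E : Type*} [AddCommGroup E] [Module ℝ E] [TopologicalSpace E] [ContinuousSMul ℝ E]

theorem exists_finset_subset_mem_hull {s : Set E} (hs : 0 ∈ interior (convexHull ℝ s)) (x : E) :
    ∃ t : Finset E, ↑t ⊆ s ∧ x ∈ PointedCone.hull ℝ (t : Set E) := by
  have hx : Tendsto (fun r : ℝ => r • x) (𝓝 0) (𝓝 0) :=
    (continuous_id.smul continuous_const).tendsto' 0 0 (zero_smul ℝ x)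
  obtain ⟨r, hr, hrx⟩ := (hx.eventually_mem (mem_interior_iff_mem_nhds.1 hs)).exists_gt
  rw [convexHull_eq_union_convexHull_finite_subsets] at hrx
  simp only [mem_iUnion] at hrx
  obtain ⟨t, hts, hrt⟩ := hrx
  refine ⟨t, hts, ?_⟩
  have hconv : convexHull ℝ (t : Set E) ⊆ PointedCone.hull ℝ (t : Set E) :=
    convexHull_min PointedCone.subset_hull (PointedCone.convex _)
  simpa [smul_smul, hr.ne'] using
    (PointedCone.hull ℝ (t : Set E)).smul_mem (inv_nonneg.2 hr.le) (hconv hrt)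

theorem exists_finset_subset_hull_eq_top [FiniteDimensional ℝ E] {s : Set E}
    (hs : 0 ∈ interior (convexHull ℝ s)) :
    ∃ t : Finset E, ↑t ⊆ s ∧ PointedCone.hull ℝ (t : Set E) = ⊤ := by
  classical
  choose t hts hxt using exists_finset_subset_mem_hull hs
  let b := Module.finBasis ℝ E
  let V := Finset.univ.image b ∪ Finset.univ.image (-⇑b)
  let T := V.biUnion t
  refine ⟨T, by rw [coe_biUnion]; exact iUnion₂_subset fun x _ => hts x, ?_⟩
  have hV : ∀ x ∈ V, x ∈ PointedCone.hull ℝ (T : Set E) := fun x hx =>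
    Submodule.span_mono (by simpa using subset_biUnion_of_mem t hx) (hxt x)
  -- `± b i` lie in the cone, so its lineality space contains a basis
  have hb : ∀ i, b i ∈ (PointedCone.hull ℝ (T : Set E)).lineal := fun i =>
    PointedCone.mem_lineal.2 ⟨hV _ (by simp [V]), hV _ (by simp [V])⟩
  have hlin : (PointedCone.hull ℝ (T : Set E)).lineal = ⊤ :=
    eq_top_iff.2 (b.span_eq ▸ Submodule.span_le.2 (range_subset_iff.2 hb))
  exact eq_top_iff.2 fun x _ => PointedCone.lineal_le _ (hlin ▸ Submodule.mem_top)

theorem exists_finite_params_nonneg_combination_eq [FiniteDimensional ℝ E] {c : ℝ → E}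
    (hc : 0 ∈ interior (convexHull ℝ (range c))) :
    ∃ M > 0, ∃ τ : ℕ → ℝ, ∀ y : E,
      ∃ μ : ℕ → ℝ, (∀ j, 0 ≤ μ j) ∧ ∑ j ∈ range M, μ j • c (τ j) = y := by
  classical
  obtain ⟨t, htc, htop⟩ := exists_finset_subset_hull_eq_top hc
  -- `c 0` is inserted only to make `M > 0`
  set T := insert (c 0) t
  have hTc : ↑T ⊆ range c := by simpa [T, insert_subset_iff] using htc
  have hT : PointedCone.hull ℝ (T : Set E) = ⊤ :=
    top_unique (htop ▸ Submodule.span_mono (by simp [T, Set.subset_insert]))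
  let e := T.equivFin
  let v : ℕ → E := fun j => if h : j < #T then e.symm ⟨j, h⟩ else 0
  refine ⟨#T, card_pos.2 (insert_nonempty _ _), fun j => Function.invFun c (v j), fun y => ?_⟩
  obtain ⟨f, -, hf⟩ := Submodule.mem_span_finset.1 (hT ▸ Submodule.mem_top (x := y))
  refine ⟨fun j => f (v j), fun j => (f (v j)).2, ?_⟩
  rw [← hf, ← Finset.sum_coe_sort T, ← e.symm.sum_comp, Finset.sum_range]
  refine Fintype.sum_congr _ _ fun i => ?_
  have hv : v i = e.symm i := by simp [v]
  dsimp only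
  rw [hv, Function.invFun_eq (hTc (e.symm i).2), Nonneg.coe_smul]

end ConeHull

section PeriodicLift

variable {ψ : ℝ → ℝ} {L h δ : ℝ}

/-- The extension of `ψ` on `[0, L)` to the map `f : ℝ → ℝ` with `f (t + L) = f t + h`. -/
noncomputable def periodicLift (ψ : ℝ → ℝ) (L h : ℝ) (t : ℝ) : ℝ :=
  h * ⌊t / L⌋ + ψ (t - ⌊t / L⌋ * L)

theorem periodicLift_add_period (hL : L ≠ 0) (t : ℝ) :
    periodicLift ψ L h (t + L) = periodicLift ψ L h t + h := by
  have hfloor : ⌊(t + L) / L⌋ = ⌊t / L⌋ + 1 := by rw [add_div, div_self hL, Int.floor_add_one]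
  simp only [periodicLift, hfloor]
  push_cast
  rw [show t + L - ((⌊t / L⌋ : ℝ) + 1) * L = t - ⌊t / L⌋ * L by ring]
  ring

variable (hL : 0 < L) (hδL : δ ≤ L) (h₀ : ∀ t ≤ 0, ψ t = ψ 0) (h₁ : ∀ t ≥ L - δ, ψ t = ψ 0 + h)
include hL hδL h₀ h₁

theorem periodicLift_eq_of_mem_Ioo (m : ℤ) {t : ℝ} (ht : t ∈ Ioo (m * L - δ) ((m + 1) * L)) :
    periodicLift ψ L h t = h * m + ψ (t - m * L) := by
  rcases le_or_gt (m * L) t with hmt | hmt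
  · have hfloor : ⌊t / L⌋ = m :=
      Int.floor_eq_iff.2 ⟨(le_div_iff₀ hL).2 hmt, (div_lt_iff₀ hL).2 ht.2⟩
    rw [periodicLift, hfloor]
  · have hfloor : ⌊t / L⌋ = m - 1 := by
      refine Int.floor_eq_iff.2 ⟨(le_div_iff₀ hL).2 ?_, (div_lt_iff₀ hL).2 ?_⟩ <;>
        push_cast <;> linarith [ht.1]
    rw [periodicLift, hfloor, h₀ (t - m * L) (by linarith), h₁ _ (by push_cast; linarith [ht.1])]
    push_cast
    ring

theorem contDiff_periodicLift (hδ : 0 < δ) {n : WithTop ℕ∞} (hψ : ContDiff ℝ n ψ) :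
    ContDiff ℝ n (periodicLift ψ L h) := by
  refine contDiff_iff_contDiffAt.2 fun t => ?_
  set m := ⌊t / L⌋
  have ht : t ∈ Ioo (m * L - δ) ((m + 1) * L) :=
    ⟨by linarith [(le_div_iff₀ hL).1 (Int.floor_le (t / L))],
      (div_lt_iff₀ hL).1 (Int.lt_floor_add_one (t / L))⟩
  have hloc : periodicLift ψ L h =ᶠ[𝓝 t] fun s => h * m + ψ (s - m * L) :=
    eventually_of_mem (isOpen_Ioo.mem_nhds ht) fun s hs =>
      periodicLift_eq_of_mem_Ioo hL hδL h₀ h₁ m hs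
  exact (contDiffAt_const.add (hψ.comp (contDiff_id.sub contDiff_const)).contDiffAt)
    |>.congr_of_eventuallyEq hloc

theorem periodicLift_eqOn_Icc (hδ : 0 < δ) : EqOn (periodicLift ψ L h) ψ (Icc 0 L) := by
  rintro t ⟨ht0, htL⟩
  rcases htL.lt_or_eq with htL | htL
  · simpa using periodicLift_eq_of_mem_Ioo hL hδL h₀ h₁ 0 (t := t) ⟨by simp; linarith, by simpa⟩
  · have hend := periodicLift_add_period (ψ := ψ) (h := h) hL.ne' 0
    rw [zero_add] at hend
    rw [htL, hend, periodicLift_eq_of_mem_Ioo hL hδL h₀ h₁ 0 ⟨by simpa, by simpa⟩,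
      h₁ L (by linarith)]
    simp

end PeriodicLift

section Staircase

variable {E : Type*} [NormedAddCommGroup E] [NormedSpace ℝ E]
variable (lam u : ℕ → ℝ)

def pauseStart (j : ℕ) : ℝ := 1 + j + ∑ i ∈ range j, lam i

def pauseEnd (j : ℕ) : ℝ := pauseStart lam j + lam j

/-- Rests at `u 0` until time `1`, at `u j` on `[pauseStart j, pauseEnd j]`, moves smoothly from
`u j` to `u (j + 1)` on `[pauseEnd j, pauseStart (j + 1)]`, and rests at `u M` from `pauseStart M`
on. -/
noncomputable def staircase (M : ℕ) (t : ℝ) : ℝ :=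
  u 0 + ∑ j ∈ range M, (u (j + 1) - u j) * smoothTransition (t - pauseEnd lam j)

noncomputable def transitionIntegral (g : ℝ → E) (j : ℕ) : E :=
  ∫ s in (0 : ℝ)..1, g (u j + (u (j + 1) - u j) * smoothTransition s)

variable {lam u}

@[simp] theorem pauseStart_zero : pauseStart lam 0 = 1 := by simp [pauseStart]

theorem pauseStart_succ (j : ℕ) : pauseStart lam (j + 1) = pauseEnd lam j + 1 := by
  simp only [pauseStart, pauseEnd, sum_range_succ]
  push_cast
  ring

theorem staircase_succ (M : ℕ) (t : ℝ) :
    staircase lam u (M + 1) t =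
      staircase lam u M t + (u (M + 1) - u M) * smoothTransition (t - pauseEnd lam M) := by
  simp only [staircase, sum_range_succ, add_assoc]

theorem contDiff_staircase (M : ℕ) {n : ℕ∞} : ContDiff ℝ n (staircase lam u M) :=
  contDiff_const.add <| ContDiff.sum fun _ _ =>
    contDiff_const.mul (smoothTransition.contDiff.comp (contDiff_id.sub contDiff_const))

theorem continuous_staircase (M : ℕ) : Continuous (staircase lam u M) :=
  (contDiff_staircase (n := 0) M).continuous

variable (hlam : ∀ j, 0 ≤ lam j)
include hlam

theorem pauseStart_le_pauseEnd (j : ℕ) : pauseStart lam j ≤ pauseEnd lam j :=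
  le_add_of_nonneg_right (hlam j)

theorem monotone_pauseEnd : Monotone (pauseEnd lam) :=
  monotone_nat_of_le_succ fun j => by
    linarith [pauseStart_succ (lam := lam) j, pauseStart_le_pauseEnd hlam (j + 1)]

theorem monotone_pauseStart : Monotone (pauseStart lam) :=
  monotone_nat_of_le_succ fun j => by
    linarith [pauseStart_succ (lam := lam) j, pauseStart_le_pauseEnd hlam j]

theorem one_le_pauseStart (j : ℕ) : 1 ≤ pauseStart lam j :=
  pauseStart_zero (lam := lam) ▸ monotone_pauseStart hlam j.zero_le

theorem staircase_of_pauseStart_le {N : ℕ} {t : ℝ} (ht : pauseStart lam N ≤ t) :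
    staircase lam u N t = u N := by
  have hS : ∀ j ∈ range N, smoothTransition (t - pauseEnd lam j) = 1 := fun j hj =>
    smoothTransition.one_of_one_le <| by
      linarith [pauseStart_succ (lam := lam) j,
        monotone_pauseStart hlam (Nat.succ_le_of_lt (mem_range.1 hj))]
  rw [staircase, sum_congr rfl fun j hj => by rw [hS j hj, mul_one], sum_range_sub u N]
  ring

theorem staircase_eq_of_le_pauseEnd {N M : ℕ} (hNM : N ≤ M) {t : ℝ}
    (ht : t ≤ pauseEnd lam N) : staircase lam u M t = staircase lam u N t := by
  have hS : ∀ j ∈ Finset.Ico N M, smoothTransition (t - pauseEnd lam j) = 0 := fun j hj =>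
    smoothTransition.zero_of_nonpos <| by
      linarith [monotone_pauseEnd hlam (Finset.mem_Ico.1 hj).1]
  rw [staircase, ← sum_range_add_sum_Ico _ hNM,
    sum_eq_zero (s := Finset.Ico N M) fun j hj => by rw [hS j hj, mul_zero], add_zero, staircase]

theorem staircase_of_le_one (M : ℕ) {t : ℝ} (ht : t ≤ 1) : staircase lam u M t = u 0 := by
  rw [staircase_eq_of_le_pauseEnd hlam M.zero_le
    (ht.trans ((one_le_pauseStart hlam 0).trans (pauseStart_le_pauseEnd hlam 0)))]
  simp [staircase]

theorem staircase_eq_of_mem_Icc {M j : ℕ} (hj : j < M) {t : ℝ}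
    (ht : t ∈ Icc (pauseStart lam j) (pauseStart lam (j + 1))) :
    staircase lam u M t = u j + (u (j + 1) - u j) * smoothTransition (t - pauseEnd lam j) := by
  rw [staircase_eq_of_le_pauseEnd hlam hj (ht.2.trans (pauseStart_le_pauseEnd hlam _)),
    staircase_succ, staircase_of_pauseStart_le hlam ht.1]

variable [CompleteSpace E] {g : ℝ → E}

theorem integral_staircase_pauseStart_succ (hg : Continuous g) {M j : ℕ} (hj : j < M) :
    ∫ t in pauseStart lam j..pauseStart lam (j + 1), g (staircase lam u M t) =
      lam j • g (u j) + transitionIntegral u g j := by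
  have hint : ∀ a b : ℝ, IntervalIntegrable (fun t => g (staircase lam u M t)) volume a b :=
    fun a b => (hg.comp (continuous_staircase M)).intervalIntegrable a b
  have hend := pauseStart_le_pauseEnd hlam j
  have hsucc := pauseStart_succ (lam := lam) j
  rw [← intervalIntegral.integral_add_adjacent_intervals (hint _ (pauseEnd lam j)) (hint _ _)]
  congr 1
  · rw [intervalIntegral.integral_congr (g := fun _ => g (u j)) fun t ht => ?_,
      intervalIntegral.integral_const, pauseEnd, add_sub_cancel_left]
    rw [Set.uIcc_of_le hend] at ht
    rw [staircase_eq_of_mem_Icc hlam hj ⟨ht.1, by linarith [ht.2]⟩,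
      smoothTransition.zero_of_nonpos (by linarith [ht.2]), mul_zero, add_zero]
  · rw [intervalIntegral.integral_congr (g := fun t =>
        g (u j + (u (j + 1) - u j) * smoothTransition (t - pauseEnd lam j))) fun t ht => ?_,
      intervalIntegral.integral_comp_sub_right
        (fun s => g (u j + (u (j + 1) - u j) * smoothTransition s)), sub_self, hsucc,
      add_sub_cancel_left, transitionIntegral]
    rw [Set.uIcc_of_le (by linarith)] at ht
    rw [staircase_eq_of_mem_Icc hlam hj ⟨by linarith [ht.1], ht.2⟩]

theorem integral_staircase (hg : Continuous g) (M : ℕ) :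
    ∫ t in (0 : ℝ)..pauseStart lam M + 1, g (staircase lam u M t) =
      ∑ j ∈ range M, lam j • g (u j) +
        (g (u 0) + ∑ j ∈ range M, transitionIntegral u g j + g (u M)) := by
  have hint : ∀ a b : ℝ, IntervalIntegrable (fun t => g (staircase lam u M t)) volume a b :=
    fun a b => (hg.comp (continuous_staircase M)).intervalIntegrable a b
  have hfirst : ∫ t in (0 : ℝ)..1, g (staircase lam u M t) = g (u 0) := by
    rw [intervalIntegral.integral_congr (g := fun _ => g (u 0)) fun t ht => ?_,
      intervalIntegral.integral_const, sub_zero, one_smul]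
    rw [Set.uIcc_of_le zero_le_one] at ht
    rw [staircase_of_le_one hlam M ht.2]
  have hmid : ∫ t in pauseStart lam 0..pauseStart lam M, g (staircase lam u M t) =
      ∑ j ∈ range M, (lam j • g (u j) + transitionIntegral u g j) := by
    rw [← intervalIntegral.sum_integral_adjacent_intervals fun k _ => hint _ _]
    exact sum_congr rfl fun j hj => integral_staircase_pauseStart_succ hlam hg (mem_range.1 hj)
  have hlast :
      ∫ t in pauseStart lam M..pauseStart lam M + 1, g (staircase lam u M t) = g (u M) := by
    rw [intervalIntegral.integral_congr (g := fun _ => g (u M)) fun t ht => ?_,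
      intervalIntegral.integral_const, add_sub_cancel_left, one_smul]
    rw [Set.uIcc_of_le (by linarith)] at ht
    rw [staircase_of_pauseStart_le hlam ht.1]
  rw [pauseStart_zero] at hmid
  rw [← intervalIntegral.integral_add_adjacent_intervals (hint 0 1) (hint 1 _),
    ← intervalIntegral.integral_add_adjacent_intervals (hint 1 (pauseStart lam M)) (hint _ _),
    hfirst, hmid, hlast, sum_add_distrib]
  abel

end Staircase

section ClosedCurve

variable {E : Type*} [NormedAddCommGroup E] [NormedSpace ℝ E]

theorem exists_reparam_integral_eq_zero [FiniteDimensional ℝ E] {c : ℝ → E} (hc : Continuous c)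
    (h0 : 0 ∈ interior (convexHull ℝ (range c))) (T : ℝ) :
    ∃ L > 0, ∃ φ : ℝ → ℝ, ContDiff ℝ ∞ φ ∧ (∀ t, φ (t + L) = φ t + T) ∧
      ∫ t in (0 : ℝ)..L, c (φ t) = 0 := by
  obtain ⟨M, hM, τ, hτ⟩ := exists_finite_params_nonneg_combination_eq h0
  let u : ℕ → ℝ := fun j => if j < M then τ j else τ 0 + T
  have hu : u M = u 0 + T := by simp [u, hM]
  obtain ⟨lam, hlam, hsum⟩ :=
    hτ (-(c (u 0) + ∑ j ∈ range M, transitionIntegral u c j + c (u M)))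
  have hM1 := one_le_pauseStart hlam M
  have h₀ : ∀ t ≤ 0, staircase lam u M t = staircase lam u M 0 := fun t ht => by
    rw [staircase_of_le_one hlam M (by linarith), staircase_of_le_one hlam M zero_le_one]
  have h₁ : ∀ t ≥ pauseStart lam M + 1 - 1, staircase lam u M t = staircase lam u M 0 + T :=
    fun t ht => by
      rw [staircase_of_pauseStart_le hlam (by linarith), staircase_of_le_one hlam M zero_le_one, hu]
  have hL : 0 < pauseStart lam M + 1 := by linarith
  have hδL : (1 : ℝ) ≤ pauseStart lam M + 1 := by linarith
  refine ⟨_, hL, periodicLift (staircase lam u M) _ T,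
    contDiff_periodicLift hL hδL h₀ h₁ one_pos (contDiff_staircase M),
    periodicLift_add_period hL.ne', ?_⟩
  have hlift : EqOn (fun t => c (periodicLift (staircase lam u M) (pauseStart lam M + 1) T t))
      (fun t => c (staircase lam u M t)) (uIcc 0 (pauseStart lam M + 1)) := fun t ht =>
    congrArg c (periodicLift_eqOn_Icc hL hδL h₀ h₁ one_pos (Set.uIcc_of_le hL.le ▸ ht))
  have hpauses : ∑ j ∈ range M, lam j • c (u j) = ∑ j ∈ range M, lam j • c (τ j) :=
    sum_congr rfl fun j hj => by simp [u, mem_range.1 hj]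
  rw [intervalIntegral.integral_congr hlift, integral_staircase hlam hc M, hpauses, hsum,
    neg_add_cancel]

theorem range_comp_eq_of_add_period {α : Type*} {c : ℝ → α} {φ : ℝ → ℝ} {L T : ℝ}
    (hφ : Continuous φ) (hφL : ∀ t, φ (t + L) = φ t + T) (hc : Function.Periodic c T)
    (hT : T ≠ 0) : range (c ∘ φ) = range c := by
  refine (range_comp_subset_range φ c).antisymm ?_
  have hL : φ L = φ 0 + T := by simpa using hφL 0
  rw [← hc.image_uIcc hT (φ 0), ← hL, range_comp]
  exact image_mono ((intermediate_value_uIcc hφ.continuousOn).trans (image_subset_range _ _))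

theorem contDiff_primitive [CompleteSpace E] {f : ℝ → E} {n : ℕ∞} (hf : ContDiff ℝ n f) (a : ℝ) :
    ContDiff ℝ n fun x => ∫ t in a..x, f t := by
  have hderiv : ∀ x, HasDerivAt (fun x => ∫ t in a..x, f t) (f x) x := fun x =>
    (hf.continuous.integral_hasStrictDerivAt a x).hasDerivAt
  refine (contDiff_succ_iff_deriv.2 ⟨fun x => (hderiv x).differentiableAt, ?_, ?_⟩).of_le
    le_self_add
  · exact fun h => absurd h WithTop.coe_ne_top
  · rwa [funext fun x => (hderiv x).deriv]

end ClosedCurve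

theorem stmt_11_general (n : ℕ) (k : ℕ)
    (c : ℝ → EuclideanSpace ℝ (Fin n))
    (hc : ContDiff ℝ k c) (hcper : Function.Periodic c (2 * Real.pi))
    (hc1 : ∀ x, ‖c x‖ = 1)
    (hhull : (0 : EuclideanSpace ℝ (Fin n)) ∈ interior (convexHull ℝ (Set.range c))) :
    ∃ L > (0:ℝ), ∃ a : ℝ → EuclideanSpace ℝ (Fin n),
      Function.Periodic a L ∧ ContDiff ℝ k a ∧
      (∀ x, ‖deriv a x‖ = 1) ∧ Set.range (deriv a) = Set.range c := by
  obtain ⟨L, hL, φ, hφ, hφL, hint⟩ :=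
    exists_reparam_integral_eq_zero hc.continuous hhull (2 * π)
  have hb : Continuous (c ∘ φ) := hc.continuous.comp hφ.continuous
  have hper : Function.Periodic (c ∘ φ) L := fun t => by simp [hφL, hcper (φ t)]
  have hderiv : deriv (fun x => ∫ t in (0 : ℝ)..x, c (φ t)) = c ∘ φ :=
    funext (hb.deriv_integral _ 0)
  refine ⟨L, hL, fun x => ∫ t in (0 : ℝ)..x, c (φ t), fun x => ?_,
    contDiff_primitive (hc.comp (hφ.of_le (mod_cast le_top))) 0,
    fun x => hderiv ▸ hc1 (φ x),
    hderiv ▸ range_comp_eq_of_add_period hφ.continuous hφL hcper (by positivity)⟩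
  simpa [hint] using hper.intervalIntegral_add_eq_add 0 x fun _ _ => hb.intervalIntegrable _ _

/-- any closed `C^k` curve `c` on the unit sphere `S^{n−1}` whose convex hull
contains a neighborhood of the origin is the set of unit tangent vectors of some closed
curve `a` parametrized by arclength: there are `L > 0` and an `L`-periodic `C^k` map
`a` with `|a'| ≡ 1` and `range(a') = range(c)`. -/
theorem stmt_11 (n : ℕ) (hn : 2 ≤ n) (k : ℕ) (hk : 1 ≤ k)
    (c : ℝ → EuclideanSpace ℝ (Fin n))
    (hc : ContDiff ℝ k c) (hcper : Function.Periodic c (2 * Real.pi))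
    (hc1 : ∀ x, ‖c x‖ = 1)
    (hhull : (0 : EuclideanSpace ℝ (Fin n)) ∈ interior (convexHull ℝ (Set.range c))) :
    ∃ L > (0:ℝ), ∃ a : ℝ → EuclideanSpace ℝ (Fin n),
      Function.Periodic a L ∧ ContDiff ℝ k a ∧
      (∀ x, ‖deriv a x‖ = 1) ∧ Set.range (deriv a) = Set.range c :=
  stmt_11_general n k c hc hcper hc1 hhull
end

section
/- Let a, b : ℝ → ℝ² be of class C¹ with |a'(s)| = |b'(s)| = 1 for all s, with a' and b' periodic with period E₀ > 0 and ∫₀^{E₀}(a' + b') = 0. Then at least one of the following holds: (i) there exists t₀ ∈ ℝ such that a'(x + t₀) + b'(x − t₀) = 0 for all x ∈ ℝ; or (ii) the set {t ∈ ℝ : there exists x ∈ ℝ with a'(x+t) + b'(x−t) = 0} contains a nonempty open interval. -/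
/-!
Rotate `a'` and `-b'` into unit-speed curves `A, B : ℝ → ℂ` and lift them, `A = exp (i α)`,
`B = exp (i β)`. A time `t` is singular iff the phase gap `α (x + t) - β (x - t)` lies in `2πℤ`
for some `x`, and a strict crossing of a level `2πk` persists for nearby times. If `α` and `β` wind
differently over a period, the gap is unbounded in `x` in both directions. Otherwise it is
periodic in `x` with mean `W + 2dt` (`d` the common winding). If this mean is in `2πℤ` at some
`t`, the gap either equals that level identically (a singular slice) or crosses it strictly.
In the remaining case `d = 0` and the mean lies strictly between `2πk` and `2π(k + 1)`: either
some gap crosses one of these levels, or `A` and `B` take values in complementary arcs of the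
circle, and `∫ A = ∫ B` forces `A = B` to be constant.
-/

open Complex Set Function intervalIntegral
open scoped Real

namespace ExtremalCylinder

variable {A B : ℝ → ℂ} {α β : ℝ → ℝ} {E : ℝ}

theorem exp_mul_I_eq_exp_mul_I_iff {x y : ℝ} :
    exp (x * I) = exp (y * I) ↔ ∃ k : ℤ, x = y + k * (2 * π) := by
  rw [← Circle.coe_exp, ← Circle.coe_exp, Circle.coe_inj, Circle.exp_eq_exp]

theorem exists_continuous_lift (hA : Continuous A) (hA1 : ∀ u, ‖A u‖ = 1) :
    ∃ α : ℝ → ℝ, Continuous α ∧ ∀ u, exp (α u * I) = A u := by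
  let g : C(ℝ, Circle) := ⟨fun u ↦ ⟨A u, by simp [Submonoid.unitSphere, hA1]⟩, by fun_prop⟩
  obtain ⟨θ, hθ⟩ := Circle.exp_surjective (g 0)
  obtain ⟨F, -, hF⟩ := (Circle.isCoveringMap_exp.existsUnique_continuousMap_lifts g 0 θ hθ).exists
  refine ⟨F, F.continuous, fun u ↦ ?_⟩
  rw [← Circle.coe_exp]
  exact congrArg (fun f ↦ ((f u : Circle) : ℂ)) hF

theorem exists_add_period_eq_add (hα : Continuous α)
    (hαA : ∀ u, exp (α u * I) = A u) (hA : Periodic A E) :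
    ∃ d, ∀ u, α (u + E) = α u + d := by
  have hexp : ∀ u, Circle.exp (α (u + E) - α u) = 1 := fun u ↦ by
    rw [Circle.exp_sub, div_eq_one, Circle.ext_iff, Circle.coe_exp, Circle.coe_exp, hαA, hαA, hA]
  have hconst := Circle.isCoveringMap_exp.const_of_comp (g := fun u ↦ α (u + E) - α u)
    (by fun_prop) fun u v ↦ by rw [hexp, hexp]
  exact ⟨α (0 + E) - α 0, fun u ↦ by linarith [hconst u 0]⟩

theorem eqOn_or_exists_lt_lt_of_integral_eq {f : ℝ → ℝ} {a b c : ℝ} (hab : a < b)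
    (hf : ContinuousOn f (Icc a b)) (h : ∫ x in a..b, f x = (b - a) * c) :
    EqOn f (fun _ ↦ c) (Icc a b) ∨ ∃ x ∈ Icc a b, ∃ y ∈ Icc a b, f x < c ∧ c < f y := by
  by_contra! hcon
  obtain ⟨hne, hlt⟩ := hcon
  simp only [EqOn, not_forall] at hne
  obtain ⟨z, hz, hfz⟩ := hne
  have hc : ∫ _ in a..b, c = (b - a) * c := by simp
  rcases lt_or_gt_of_ne hfz with hz' | hz'
  · have := integral_lt_integral_of_continuousOn_of_le_of_exists_lt hab hf continuousOn_const
      (fun y hy ↦ hlt z hz y (Ioc_subset_Icc_self hy) hz') ⟨z, hz, hz'⟩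
    linarith
  · have := integral_lt_integral_of_continuousOn_of_le_of_exists_lt hab continuousOn_const hf
      (fun x hx ↦ not_lt.1 fun h ↦ (hlt x (Ioc_subset_Icc_self hx) z hz h).not_gt hz')
      ⟨z, hz, hz'⟩
    linarith

theorem exists_le_and_exists_ge_of_integral_eq {f : ℝ → ℝ} {a b c : ℝ} (hab : a < b)
    (hf : ContinuousOn f (Icc a b)) (h : ∫ x in a..b, f x = (b - a) * c) :
    (∃ x ∈ Icc a b, f x ≤ c) ∧ ∃ y ∈ Icc a b, c ≤ f y := by
  rcases eqOn_or_exists_lt_lt_of_integral_eq hab hf h with hc | ⟨x, hx, y, hy, hxc, hcy⟩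
  · exact ⟨⟨a, left_mem_Icc.2 hab.le, (hc (left_mem_Icc.2 hab.le)).le⟩,
      ⟨a, left_mem_Icc.2 hab.le, (hc (left_mem_Icc.2 hab.le)).ge⟩⟩
  · exact ⟨⟨x, hx, hxc.le⟩, ⟨y, hy, hcy.le⟩⟩

theorem integral_comp_add_right_of_add_period {f : ℝ → ℝ} {E d : ℝ} (hf : Continuous f)
    (h : ∀ x, f (x + E) = f x + d) (c : ℝ) :
    ∫ x in 0..E, f (x + c) = (∫ x in 0..E, f x) + d * c := by
  have hshift : ∫ x in E..E + c, f x = (∫ x in 0..c, f x) + d * c :=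
    calc ∫ x in E..E + c, f x = ∫ x in 0..c, f (x + E) := by
          rw [integral_comp_add_right, zero_add, add_comm]
      _ = ∫ x in 0..c, (f x + d) := by simp only [h]
      _ = (∫ x in 0..c, f x) + d * c := by
          rw [integral_add (hf.intervalIntegrable _ _) intervalIntegrable_const]
          simp [mul_comm]
  rw [integral_comp_add_right, zero_add, ← integral_add_adjacent_intervals
    (hf.intervalIntegrable c E) (hf.intervalIntegrable E (E + c)), hshift,
    ← integral_add_adjacent_intervals (hf.intervalIntegrable 0 c) (hf.intervalIntegrable c E)]
  ring

theorem exists_lt_and_lt_of_add_period {f : ℝ → ℝ} {E d : ℝ} (hd : d ≠ 0)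
    (h : ∀ x, f (x + E) = f x + d) (c : ℝ) : ∃ x₁ x₂, f x₁ < c ∧ c < f x₂ := by
  let F : AddConstMap ℝ ℝ E d := ⟨f, h⟩
  have hF (n : ℤ) : f (n * E) = f 0 + n * d := by
    simpa [F, zsmul_eq_mul] using AddConstMapClass.map_add_zsmul F 0 n
  obtain ⟨n, hn⟩ := exists_int_gt (|f 0 - c| / |d|)
  rw [div_lt_iff₀ (abs_pos.2 hd)] at hn
  obtain ⟨hn₁, hn₂⟩ := abs_lt.1 hn
  rcases lt_or_gt_of_ne hd with hd' | hd'
  · rw [abs_of_neg hd'] at hn₁ hn₂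
    refine ⟨n * E, (-n : ℤ) * E, ?_, ?_⟩ <;> rw [hF] <;> push_cast <;> linarith
  · rw [abs_of_pos hd'] at hn₁ hn₂
    refine ⟨(-n : ℤ) * E, n * E, ?_, ?_⟩ <;> rw [hF] <;> push_cast <;> linarith

theorem sin_sub_sub_sin_sub (x y φ : ℝ) :
    Real.sin (x - φ) - Real.sin (y - φ) =
      2 * Real.sin ((x - y) / 2) * Real.cos ((x + y) / 2 - φ) := by
  rw [Real.sin_sub_sin]
  ring_nf

theorem sin_sub_le_sin_sub {x y φ : ℝ} (h₁ : y ≤ x) (h₂ : x ≤ y + 2 * π)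
    (h₃ : |(x + y) / 2 - φ| ≤ π / 2) : Real.sin (y - φ) ≤ Real.sin (x - φ) := by
  have hsin : 0 ≤ Real.sin ((x - y) / 2) :=
    Real.sin_nonneg_of_nonneg_of_le_pi (by linarith) (by linarith)
  have hcos : 0 ≤ Real.cos ((x + y) / 2 - φ) := Real.cos_nonneg_of_mem_Icc (abs_le.1 h₃)
  nlinarith [sin_sub_sub_sin_sub x y φ, mul_nonneg hsin hcos]

theorem mem_of_sin_sub_eq_sin_sub {x y φ : ℝ} (h₁ : y ≤ x) (h₂ : x ≤ y + 2 * π)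
    (h₃ : |(x + y) / 2 - φ| ≤ π / 2) (h : Real.sin (x - φ) = Real.sin (y - φ)) :
    x ∈ ({y, y + 2 * π, 2 * φ - π - y, 2 * φ + π - y} : Set ℝ) := by
  have h0 : Real.sin ((x - y) / 2) * Real.cos ((x + y) / 2 - φ) = 0 := by
    linarith [sin_sub_sub_sin_sub x y φ]
  rcases mul_eq_zero.1 h0 with hs | hc
  · by_contra hne
    have : 0 < Real.sin ((x - y) / 2) := Real.sin_pos_of_pos_of_lt_pi
      (lt_of_le_of_ne (by linarith) fun h ↦ hne (by simp; left; linarith))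
      (lt_of_le_of_ne (by linarith) fun h ↦ hne (by simp; right; left; linarith))
    linarith
  · by_contra hne
    obtain ⟨hl, hr⟩ := abs_le.1 h₃
    have : 0 < Real.cos ((x + y) / 2 - φ) := Real.cos_pos_of_mem_Ioo
      ⟨lt_of_le_of_ne hl fun h ↦ hne (by simp; right; right; left; linarith),
        lt_of_le_of_ne hr fun h ↦ hne (by simp; right; right; right; linarith)⟩
    linarith

theorem exists_abs_add_sub_le (hsep : ∀ u v, β v ≤ α u ∧ α u ≤ β v + 2 * π) :
    ∃ φ, ∀ u v, |(α u + β v) / 2 - φ| ≤ π / 2 := by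
  have hbdd : BddAbove (range β) := ⟨α 0, by rintro _ ⟨v, rfl⟩; exact (hsep 0 v).1⟩
  have hbdd' : BddBelow (range β) := ⟨α 0 - 2 * π, by rintro _ ⟨v, rfl⟩; linarith [(hsep 0 v).2]⟩
  refine ⟨((⨅ v, β v) + (⨆ v, β v) + π) / 2, fun u v ↦ abs_le.2 ⟨?_, ?_⟩⟩
  · linarith [ciInf_le hbdd' v, ciSup_le fun w ↦ (hsep u w).1]
  · linarith [le_ciSup hbdd v, le_ciInf fun w ↦ (by linarith [(hsep u w).2] : α u - 2 * π ≤ β w)]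

theorem integral_sin_sub_eq_of_integral_exp_eq {a b : ℝ} (hα : Continuous α)
    (hβ : Continuous β) (h : ∫ u in a..b, exp (α u * I) = ∫ u in a..b, exp (β u * I)) (φ : ℝ) :
    ∫ u in a..b, Real.sin (α u - φ) = ∫ u in a..b, Real.sin (β u - φ) := by
  have key : ∀ γ : ℝ → ℝ, Continuous γ →
      ∫ u in a..b, Real.sin (γ u - φ) = (exp (-φ * I) * ∫ u in a..b, exp (γ u * I)).im := by
    intro γ hγ
    rw [← integral_const_mul, ← Complex.imCLM_apply,
      ← ContinuousLinearMap.intervalIntegral_comp_comm _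
        ((by fun_prop : Continuous fun u ↦ exp (-φ * I) * exp (γ u * I)).intervalIntegrable a b)]
    congr 1
    ext u
    rw [Complex.imCLM_apply, ← Complex.exp_add, ← exp_ofReal_mul_I_im]
    push_cast
    ring_nf
  rw [key α hα, key β hβ, h]

theorem sin_sub_eq_sin_sub_of_integral_exp_eq (hα : Continuous α) (hβ : Continuous β)
    (hE : 0 < E) {φ : ℝ} (hle : ∀ u v, Real.sin (β v - φ) ≤ Real.sin (α u - φ))
    (hint : ∫ u in 0..E, exp (α u * I) = ∫ u in 0..E, exp (β u * I)) :
    ∀ u ∈ Icc 0 E, ∀ v ∈ Icc 0 E, Real.sin (α u - φ) = Real.sin (β v - φ) := by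
  have hint' : ∫ u in 0..E, (Real.sin (α u - φ) - Real.sin (β u - φ)) = (E - 0) * 0 := by
    rw [integral_sub
      ((by fun_prop : Continuous fun u ↦ Real.sin (α u - φ)).intervalIntegrable _ _)
      ((by fun_prop : Continuous fun u ↦ Real.sin (β u - φ)).intervalIntegrable _ _),
      integral_sin_sub_eq_of_integral_exp_eq hα hβ hint, sub_self, mul_zero]
  have hdiag : ∀ u ∈ Icc 0 E, Real.sin (α u - φ) = Real.sin (β u - φ) := by
    rcases eqOn_or_exists_lt_lt_of_integral_eq hE (by fun_prop) hint' with h | ⟨x, -, -, -, hx, -⟩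
    · exact fun u hu ↦ sub_eq_zero.1 (h hu)
    · linarith [hle x x]
  exact fun u hu v hv ↦ by linarith [hle u v, hle v u, hdiag u hu, hdiag v hv]

/-- `A = exp (i α)` and `B = exp (i β)` take values in complementary arcs of the circle, cut off
by a chord; equal means push both onto the endpoints of the chord, and continuity then makes
them constant. -/
theorem exp_mul_I_eq_of_le_of_le (hα : Continuous α) (hβ : Continuous β)
    (hE : 0 < E) (hsep : ∀ u v, β v ≤ α u ∧ α u ≤ β v + 2 * π)
    (hint : ∫ u in 0..E, exp (α u * I) = ∫ u in 0..E, exp (β u * I)) :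
    ∀ u ∈ Icc 0 E, ∀ v ∈ Icc 0 E, exp (α u * I) = exp (β v * I) := by
  obtain ⟨φ, hφ⟩ := exists_abs_add_sub_le hsep
  have hsin := sin_sub_eq_sin_sub_of_integral_exp_eq hα hβ hE
    (fun u v ↦ sin_sub_le_sin_sub (hsep u v).1 (hsep u v).2 (hφ u v)) hint
  have h0 : (0 : ℝ) ∈ Icc 0 E := left_mem_Icc.2 hE.le
  have hαc : ∀ u ∈ Icc 0 E, α u = α 0 := fun u hu ↦
    isPreconnected_Icc.constant_of_mapsTo (Set.toFinite _).isDiscrete hα.continuousOn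
      (fun w hw ↦ mem_of_sin_sub_eq_sin_sub (hsep w 0).1 (hsep w 0).2 (hφ w 0) (hsin w hw 0 h0))
      hu h0
  have hβc : ∀ v ∈ Icc 0 E, β v = β 0 := fun v hv ↦
    isPreconnected_Icc.constant_of_mapsTo
      (T := {α 0, α 0 - 2 * π, 2 * φ - π - α 0, 2 * φ + π - α 0}) (Set.toFinite _).isDiscrete
      hβ.continuousOn (fun w hw ↦ by
        have := mem_of_sin_sub_eq_sin_sub (hsep 0 w).1 (hsep 0 w).2 (hφ 0 w) (hsin 0 h0 w hw)
        simp only [mem_insert_iff, mem_singleton_iff] at this ⊢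
        rcases this with h | h | h | h <;> simp [h])
      hv h0
  have hconst : ∀ γ : ℝ → ℝ, (∀ u ∈ Icc 0 E, γ u = γ 0) →
      ∫ u in 0..E, exp (γ u * I) = E • exp (γ 0 * I) := fun γ hγ ↦ by
    rw [integral_congr fun u hu ↦ by rw [hγ u (uIcc_of_le hE.le ▸ hu)], integral_const, sub_zero]
  rw [hconst α hαc, hconst β hβc] at hint
  intro u hu v hv
  rw [hαc u hu, hβc v hv, smul_right_injective ℂ hE.ne' hint]

def singularTimes (A B : ℝ → ℂ) : Set ℝ := {t | ∃ x, A (x + t) = B (x - t)}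

def phaseGap (α β : ℝ → ℝ) (t x : ℝ) : ℝ := α (x + t) - β (x - t)

theorem continuous_phaseGap_apply (hα : Continuous α) (hβ : Continuous β) (x : ℝ) :
    Continuous fun t ↦ phaseGap α β t x := by
  unfold phaseGap; fun_prop

theorem continuous_phaseGap (hα : Continuous α) (hβ : Continuous β) (t : ℝ) :
    Continuous (phaseGap α β t) := by
  unfold phaseGap; fun_prop

theorem apply_add_eq_apply_sub_of_phaseGap_eq (hαA : ∀ u, exp (α u * I) = A u)
    (hβB : ∀ u, exp (β u * I) = B u) {t x : ℝ} {k : ℤ} (h : phaseGap α β t x = k * (2 * π)) :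
    A (x + t) = B (x - t) := by
  rw [← hαA, ← hβB, exp_mul_I_eq_exp_mul_I_iff]
  exact ⟨k, by unfold phaseGap at h; linarith⟩

theorem mem_interior_singularTimes (hα : Continuous α) (hβ : Continuous β)
    (hαA : ∀ u, exp (α u * I) = A u) (hβB : ∀ u, exp (β u * I) = B u) {t₀ x₁ x₂ : ℝ} {k : ℤ}
    (h₁ : phaseGap α β t₀ x₁ < k * (2 * π)) (h₂ : k * (2 * π) < phaseGap α β t₀ x₂) :
    t₀ ∈ interior (singularTimes A B) := by
  rw [mem_interior_iff_mem_nhds]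
  filter_upwards [(continuous_phaseGap_apply hα hβ x₁).continuousAt.eventually_lt
    continuousAt_const h₁, continuousAt_const.eventually_lt
    (continuous_phaseGap_apply hα hβ x₂).continuousAt h₂] with t ht₁ ht₂
  obtain ⟨x, -, hx⟩ := intermediate_value_uIcc (continuous_phaseGap hα hβ t).continuousOn
    (mem_uIcc.2 (Or.inl ⟨ht₁.le, ht₂.le⟩))
  exact ⟨x, apply_add_eq_apply_sub_of_phaseGap_eq hαA hβB hx⟩

theorem singular_slice_or_interval_of_integral_eq (hα : Continuous α) (hβ : Continuous β)
    (hαA : ∀ u, exp (α u * I) = A u) (hβB : ∀ u, exp (β u * I) = B u) (hE : 0 < E) {t₀ : ℝ}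
    {k : ℤ} (hper : Periodic (phaseGap α β t₀) E)
    (hint : ∫ x in 0..E, phaseGap α β t₀ x = E * (k * (2 * π))) :
    (∃ t₀, ∀ x, A (x + t₀) = B (x - t₀)) ∨ (interior (singularTimes A B)).Nonempty := by
  rcases eqOn_or_exists_lt_lt_of_integral_eq hE (continuous_phaseGap hα hβ t₀).continuousOn
      (by rwa [sub_zero]) with hconst | ⟨x₁, -, x₂, -, h₁, h₂⟩
  · refine Or.inl ⟨t₀, fun x ↦ apply_add_eq_apply_sub_of_phaseGap_eq hαA hβB (k := k) ?_⟩
    obtain ⟨y, hy, hxy⟩ := hper.exists_mem_Ico₀ hE x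
    rw [hxy, hconst (Ico_subset_Icc_self hy)]
  · exact Or.inr ⟨t₀, mem_interior_singularTimes hα hβ hαA hβB h₁ h₂⟩

theorem singular_slice_or_interval_of_integral_mem_Ioo (hα : Continuous α) (hβ : Continuous β)
    (hαA : ∀ u, exp (α u * I) = A u) (hβB : ∀ u, exp (β u * I) = B u) (hE : 0 < E)
    (hA : Periodic A E) (hB : Periodic B E) (hAB : ∫ u in 0..E, A u = ∫ u in 0..E, B u) {W : ℝ}
    (hW : ∀ t, ∫ x in 0..E, phaseGap α β t x = E * W) {k : ℤ} (hk : k * (2 * π) < W)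
    (hk' : W < k * (2 * π) + 2 * π) :
    (∃ t₀, ∀ x, A (x + t₀) = B (x - t₀)) ∨ (interior (singularTimes A B)).Nonempty := by
  by_cases hsep : ∀ t x, k * (2 * π) ≤ phaseGap α β t x ∧ phaseGap α β t x ≤ k * (2 * π) + 2 * π
  · let β' v := β v + k * (2 * π)
    have hβ'B v : exp (β' v * I) = B v := by
      rw [← hβB, exp_mul_I_eq_exp_mul_I_iff]
      exact ⟨k, rfl⟩
    have hsep' u v : β' v ≤ α u ∧ α u ≤ β' v + 2 * π := by
      have := hsep ((u - v) / 2) ((u + v) / 2)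
      rw [phaseGap, show (u + v) / 2 + (u - v) / 2 = u by ring,
        show (u + v) / 2 - (u - v) / 2 = v by ring] at this
      constructor <;> linarith
    have heq := exp_mul_I_eq_of_le_of_le hα (by fun_prop) hE hsep'
      (by simp only [hαA, hβ'B]; exact hAB)
    refine Or.inl ⟨0, fun x ↦ ?_⟩
    obtain ⟨y, hy, hAy⟩ := hA.exists_mem_Ico₀ hE (x + 0)
    obtain ⟨z, hz, hBz⟩ := hB.exists_mem_Ico₀ hE (x - 0)
    rw [hAy, hBz, ← hαA, ← hβ'B]
    exact heq y (Ico_subset_Icc_self hy) z (Ico_subset_Icc_self hz)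
  · push Not at hsep
    obtain ⟨t, x, hx⟩ := hsep
    obtain ⟨⟨x₁, -, h₁⟩, ⟨x₂, -, h₂⟩⟩ := exists_le_and_exists_ge_of_integral_eq hE
      (continuous_phaseGap hα hβ t).continuousOn (by rw [sub_zero]; exact hW t)
    refine Or.inr ⟨t, ?_⟩
    by_cases hlow : k * (2 * π) ≤ phaseGap α β t x
    · exact mem_interior_singularTimes hα hβ hαA hβB (k := k + 1) (x₁ := x₁) (x₂ := x)
        (by push_cast; linarith) (by push_cast; linarith [hx hlow])
    · exact mem_interior_singularTimes hα hβ hαA hβB (k := k) (x₁ := x) (x₂ := x₂)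
        (by linarith) (by linarith)

theorem singular_slice_or_interval (hA : Continuous A) (hB : Continuous B) (hA1 : ∀ u, ‖A u‖ = 1)
    (hB1 : ∀ u, ‖B u‖ = 1) (hE : 0 < E) (hAper : Periodic A E) (hBper : Periodic B E)
    (hAB : ∫ u in 0..E, A u = ∫ u in 0..E, B u) :
    (∃ t₀, ∀ x, A (x + t₀) = B (x - t₀)) ∨ (interior (singularTimes A B)).Nonempty := by
  obtain ⟨α, hα, hαA⟩ := exists_continuous_lift hA hA1
  obtain ⟨β, hβ, hβB⟩ := exists_continuous_lift hB hB1
  obtain ⟨dα, hdα⟩ := exists_add_period_eq_add hα hαA hAper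
  obtain ⟨dβ, hdβ⟩ := exists_add_period_eq_add hβ hβB hBper
  rcases ne_or_eq dα dβ with hd | rfl
  · obtain ⟨x₁, x₂, h₁, h₂⟩ := exists_lt_and_lt_of_add_period (sub_ne_zero.2 hd)
      (f := phaseGap α β 0)
      (fun x ↦ by simp only [phaseGap, add_zero, sub_zero]; rw [hdα, hdβ]; ring) 0
    exact Or.inr ⟨0, mem_interior_singularTimes hα hβ hαA hβB (k := 0) (by simpa using h₁)
      (by simpa using h₂)⟩
  have hper t : Periodic (phaseGap α β t) E := fun x ↦ by
    rw [phaseGap, phaseGap, add_right_comm, add_sub_right_comm, hdα, hdβ]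
    ring
  set W := (∫ u in 0..E, α u) - ∫ u in 0..E, β u
  have hmean t : ∫ x in 0..E, phaseGap α β t x = W + 2 * dα * t := by
    have hβt := integral_comp_add_right_of_add_period hβ hdβ (-t)
    simp only [← sub_eq_add_neg] at hβt
    unfold phaseGap
    rw [integral_sub ((by fun_prop : Continuous fun x ↦ α (x + t)).intervalIntegrable 0 E)
      ((by fun_prop : Continuous fun x ↦ β (x - t)).intervalIntegrable 0 E), hβt,
      integral_comp_add_right_of_add_period hα hdα t]
    ring
  rcases ne_or_eq dα 0 with hd0 | hd0
  · exact singular_slice_or_interval_of_integral_eq hα hβ hαA hβB hE (t₀ := -W / (2 * dα))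
      (k := 0) (hper _) (by rw [hmean]; field_simp; ring)
  have hEπ : 0 < E * (2 * π) := by positivity
  have hfloor := Int.lt_floor_add_one (W / (E * (2 * π)))
  rw [div_lt_iff₀ hEπ] at hfloor
  rcases (Int.floor_le (W / (E * (2 * π)))).eq_or_lt with heq | hlt
  · exact singular_slice_or_interval_of_integral_eq hα hβ hαA hβB hE (t₀ := 0)
      (k := ⌊W / (E * (2 * π))⌋) (hper 0) (by rw [hmean, heq]; field_simp; ring)
  · rw [lt_div_iff₀ hEπ] at hlt
    refine singular_slice_or_interval_of_integral_mem_Ioo hα hβ hαA hβB hE hAper hBper hAB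
      (W := W / E) (k := ⌊W / (E * (2 * π))⌋) (fun t ↦ by rw [hmean, hd0]; field_simp; ring) ?_ ?_
    · rw [lt_div_iff₀ hE]; linarith
    · rw [div_lt_iff₀ hE]; linarith

end ExtremalCylinder

open ExtremalCylinder in
/-- dichotomy for timelike extremal cylinders in `ℝ^{1+2}`: either the whole
slice at some time `t₀` is singular (`a'(x+t₀) + b'(x−t₀) = 0` for all `x`), or the set of
singular times contains a nonempty open interval. -/
theorem stmt_16
    (a b : ℝ → EuclideanSpace ℝ (Fin 2))
    (ha : ContDiff ℝ 1 a) (hb : ContDiff ℝ 1 b)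
    (hnorm : ∀ s, ‖deriv a s‖ = 1 ∧ ‖deriv b s‖ = 1)
    (E₀ : ℝ) (hE₀ : 0 < E₀)
    (hpera : Function.Periodic (deriv a) E₀) (hperb : Function.Periodic (deriv b) E₀)
    (hint : (∫ s in (0:ℝ)..E₀, (deriv a s + deriv b s)) = 0) :
    (∃ t₀ : ℝ, ∀ x : ℝ, deriv a (x + t₀) + deriv b (x - t₀) = 0) ∨
    (∃ t₁ t₂ : ℝ, t₁ < t₂ ∧
      Set.Ioo t₁ t₂ ⊆ {t : ℝ | ∃ x : ℝ, deriv a (x + t) + deriv b (x - t) = 0}) := by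
  let e := Complex.orthonormalBasisOneI.repr.symm
  let A s := e (deriv a s)
  let B s := -e (deriv b s)
  have hsing p q : A p = B q ↔ deriv a p + deriv b q = 0 := by
    rw [eq_neg_iff_add_eq_zero, ← map_add, LinearIsometryEquiv.map_eq_zero_iff]
  have hda : Continuous (deriv a) := ha.continuous_deriv le_rfl
  have hdb : Continuous (deriv b) := hb.continuous_deriv le_rfl
  have hAB : ∫ s in 0..E₀, A s = ∫ s in 0..E₀, B s := by
    rw [← sub_eq_zero, ← intervalIntegral.integral_sub
      ((by fun_prop : Continuous A).intervalIntegrable _ _)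
      ((by fun_prop : Continuous B).intervalIntegrable _ _)]
    simp only [A, B, sub_neg_eq_add, ← map_add]
    exact (e.toLinearIsometry.intervalIntegral_comp_comm _).trans (by simp [hint])
  have hS : singularTimes A B = {t | ∃ x, deriv a (x + t) + deriv b (x - t) = 0} := by
    simp only [singularTimes, hsing]
  rcases singular_slice_or_interval (A := A) (B := B) (by fun_prop) (by fun_prop)
      (by simp [A, hnorm]) (by simp [B, hnorm]) hE₀ (fun s ↦ by simp [A, hpera s])
      (fun s ↦ by simp [B, hperb s]) hAB
    with ⟨t₀, ht₀⟩ | ⟨t, ht⟩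
  · exact Or.inl ⟨t₀, fun x ↦ (hsing _ _).1 (ht₀ x)⟩
  · obtain ⟨t₁, t₂, ht, hsub⟩ := mem_nhds_iff_exists_Ioo_subset.1 (mem_interior_iff_mem_nhds.1 ht)
    exact Or.inr ⟨t₁, t₂, ht.1.trans ht.2, hS ▸ hsub⟩
end
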